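/- arXiv:1505.06113 — 10 statements merged into one kernel-verified Lean document; each statement's English description precedes it below -/
import Mathlib

section
/- Let n be an even positive integer with 2^q exactly dividing n (q ≥ 1), let G = Z/nZ be cyclic of order n generated by e, and let w_0, w_1, ..., w_{n-1} be integers all congruent to a fixed odd integer x modulo 2^q. Then the weighted sum ∑_{i=0}^{n-1} w_i·(i·e) is nonzero in G. -/
/-! Modulo `2 ^ q` every weight may be replaced by `x`, so the weighted sum is congruent to
`x * (0 + 1 + ⋯ + (n - 1)) = x * n * (n - 1) / 2`. Writing `n = 2 ^ q * m` with `m` odd, this is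
`2 ^ (q - 1)` times the odd number `x * m * (n - 1)`, hence not divisible by `2 ^ q`, let alone
by `n`. -/

open Finset

theorem Int.sum_mul_modEq_mul_sum {ι : Type*} {s : Finset ι} {d x : ℤ} {w f : ι → ℤ}
    (hw : ∀ i ∈ s, w i ≡ x [ZMOD d]) :
    ∑ i ∈ s, w i * f i ≡ x * ∑ i ∈ s, f i [ZMOD d] := by
  rw [mul_sum]
  exact Int.ModEq.sum fun i hi => (hw i hi).mul_right _

theorem Int.sum_range_id_two_pow_succ_mul (r m : ℕ) :
    ∑ i ∈ Finset.range (2 ^ (r + 1) * m), (i : ℤ) = 2 ^ r * (m * (2 ^ (r + 1) * m - 1)) := by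
  rcases Nat.eq_zero_or_pos m with rfl | hm
  · simp
  have hgauss := congrArg (Nat.cast : ℕ → ℤ) (Finset.sum_range_id_mul_two (2 ^ (r + 1) * m))
  push_cast [Nat.cast_sub (Nat.one_le_iff_ne_zero.2 (by positivity) : 1 ≤ 2 ^ (r + 1) * m)]
    at hgauss
  refine mul_right_cancel₀ two_ne_zero (hgauss.trans ?_)
  ring

theorem Int.not_two_pow_succ_dvd_two_pow_mul {a : ℤ} (ha : Odd a) (r : ℕ) :
    ¬ 2 ^ (r + 1) ∣ 2 ^ r * a := by
  rw [pow_succ, mul_dvd_mul_iff_left (by positivity)]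
  exact fun h2 => Int.not_even_iff_odd.2 ha (even_iff_two_dvd.2 h2)

theorem Nat.odd_of_two_pow_mul_eq {n q m : ℕ} (hm : n = 2 ^ q * m) (hndvd : ¬ 2 ^ (q + 1) ∣ n) :
    Odd m := by
  refine Nat.not_even_iff_odd.1 fun ⟨k, hk⟩ => hndvd ⟨k, ?_⟩
  rw [hm, hk, pow_succ]
  ring

theorem stmt_0_general (n q : ℕ) (hq : 1 ≤ q)
    (hdvd : 2 ^ q ∣ n) (hndvd : ¬ 2 ^ (q + 1) ∣ n)
    (x : ℤ) (hx : Odd x) (w : ℕ → ℤ)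
    (hw : ∀ i < n, (2 ^ q : ℤ) ∣ (w i - x)) :
    ¬ ((n : ℤ) ∣ ∑ i ∈ Finset.range n, w i * i) := by
  intro hsum
  obtain ⟨m, hm⟩ := hdvd
  have hmodd : Odd m := Nat.odd_of_two_pow_mul_eq hm hndvd
  obtain ⟨r, rfl⟩ : ∃ r, q = r + 1 := ⟨q - 1, by omega⟩
  have hcongr : ∑ i ∈ range n, w i * i ≡ x * ∑ i ∈ range n, (i : ℤ) [ZMOD 2 ^ (r + 1)] :=
    Int.sum_mul_modEq_mul_sum fun i hi => (Int.modEq_iff_dvd.2 (hw i (mem_range.1 hi))).symm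
  have hdvd_sum : (2 ^ (r + 1) : ℤ) ∣ ∑ i ∈ range n, w i * i :=
    (Int.natCast_dvd_natCast.2 ⟨m, hm⟩).trans (by exact_mod_cast hsum)
  have hodd : Odd (x * (m * (2 ^ (r + 1) * m - 1) : ℤ)) :=
    hx.mul ((Int.odd_coe_nat m).2 hmodd |>.mul
      (((even_two.pow_of_ne_zero (by omega)).mul_right _).sub_odd odd_one))
  apply Int.not_two_pow_succ_dvd_two_pow_mul hodd r
  rw [mul_left_comm, ← Int.sum_range_id_two_pow_succ_mul, ← hm]
  exact (Int.ModEq.dvd_iff hcongr).1 hdvd_sum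

theorem stmt_0 (n q : ℕ) (hn : 0 < n) (hq : 1 ≤ q)
    (hdvd : 2 ^ q ∣ n) (hndvd : ¬ 2 ^ (q + 1) ∣ n)
    (x : ℤ) (hx : Odd x) (w : ℕ → ℤ)
    (hw : ∀ i < n, (2 ^ q : ℤ) ∣ (w i - x)) :
    ¬ ((n : ℤ) ∣ ∑ i ∈ Finset.range n, w i * i) :=
  stmt_0_general n q hq hdvd hndvd x hx w hw
end

section
/- Let n be a positive integer. The plus-minus weighted Harborth constant of the cyclic group C_n equals n+1 if n ≡ 2 (mod 4), and equals n otherwise (for n ≥ 1 with appropriate convention). -/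
/-!
A subset of `ZMod n` with at least `n` elements is all of `ZMod n`, so the constant is `n` or
`n + 1` according as `ZMod n` itself carries a signed zero-sum. Since
`∑ ε g • g = ∑ g - 2 • ∑_{ε g = -1} g`, this happens iff `∑ g = n (n - 1) / 2` is a double in
`ZMod n`. For odd `n` this sum is `0`, and for `4 ∣ n` it is an even integer; for `n ≡ 2 (mod 4)`
it is odd, and reducing modulo `2` (which divides `n`) kills every double.
-/

/-- The plus-minus weighted Harborth constant of the cyclic group `ZMod n`:
the smallest `ℓ` such that every subset of `ZMod n` of size at least `ℓ`
has a subset of size `n` admitting a `{+1,-1}`-weighted zero-sum. -/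
noncomputable def harborthPM (n : ℕ) : ℕ :=
  sInf {ℓ : ℕ | ∀ S : Finset (ZMod n), ℓ ≤ S.card →
    ∃ T ⊆ S, T.card = n ∧
      ∃ ε : ZMod n → ℤ, (∀ g ∈ T, ε g = 1 ∨ ε g = -1) ∧ ∑ g ∈ T, ε g • g = 0}

open Finset

section SignedZeroSum

variable {G : Type*} [AddCommGroup G]

def HasSignedZeroSum (T : Finset G) : Prop :=
  ∃ ε : G → ℤ, (∀ g ∈ T, ε g = 1 ∨ ε g = -1) ∧ ∑ g ∈ T, ε g • g = 0

theorem HasSignedZeroSum.exists_sum_eq_two_nsmul {T : Finset G} (h : HasSignedZeroSum T) :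
    ∃ c, ∑ g ∈ T, g = 2 • c := by
  obtain ⟨ε, hε, hsum⟩ := h
  refine ⟨∑ g ∈ T with ε g = -1, g, ?_⟩
  have split : ∀ g ∈ T, g = ε g • g + 2 • (if ε g = -1 then g else 0) := by
    intro g hg
    rcases hε g hg with h | h <;> simp [h, two_nsmul]
  rw [sum_congr rfl split, sum_add_distrib, hsum, ← smul_sum, sum_filter, zero_add]

theorem hasSignedZeroSum_of_sum_eq_two_nsmul [DecidableEq G] {T : Finset G} {c : G} (hc : c ∈ T)
    (h : ∑ g ∈ T, g = 2 • c) : HasSignedZeroSum T := by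
  refine ⟨fun g => if g = c then -1 else 1, fun g _ => by dsimp only; split_ifs <;> simp, ?_⟩
  have split : ∀ g ∈ T, (if g = c then (-1 : ℤ) else 1) • g = g - 2 • (if g = c then g else 0) := by
    intro g _
    split_ifs <;> simp [two_nsmul]
  rw [sum_congr rfl split, sum_sub_distrib, ← smul_sum, sum_ite_eq' T c, if_pos hc, h, sub_self]

theorem hasSignedZeroSum_univ_iff [Fintype G] [DecidableEq G] :
    HasSignedZeroSum (univ : Finset G) ↔ ∃ c, ∑ g : G, g = 2 • c :=
  ⟨HasSignedZeroSum.exists_sum_eq_two_nsmul,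
    fun ⟨c, hc⟩ => hasSignedZeroSum_of_sum_eq_two_nsmul (T := univ) (mem_univ c) hc⟩

end SignedZeroSum

namespace Nat

theorem mul_pred_div_two_eq_of_four_dvd {n : ℕ} (h : 4 ∣ n) :
    n * (n - 1) / 2 = 2 * (n / 4 * (n - 1)) := by
  obtain ⟨m, rfl⟩ := h
  rw [Nat.mul_div_cancel_left m four_pos]
  exact Nat.div_eq_of_eq_mul_left two_pos (by ring)

theorem dvd_mul_pred_div_two_of_odd {n : ℕ} (h : Odd n) : n ∣ n * (n - 1) / 2 := by
  obtain ⟨k, rfl⟩ := h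
  rw [Nat.add_sub_cancel, Nat.mul_div_assoc _ (dvd_mul_right 2 k)]
  exact dvd_mul_right _ _

theorem odd_mul_pred_div_two_of_mod_four_eq_two {n : ℕ} (h : n % 4 = 2) :
    Odd (n * (n - 1) / 2) := by
  obtain ⟨m, rfl⟩ : ∃ m, n = 4 * m + 2 := ⟨n / 4, by omega⟩
  rw [show 4 * m + 2 - 1 = 4 * m + 1 by omega,
    Nat.div_eq_of_eq_mul_left two_pos
      (show (4 * m + 2) * (4 * m + 1) = (2 * m + 1) * (4 * m + 1) * 2 by ring)]
  exact Odd.mul ⟨m, rfl⟩ ⟨2 * m, by ring⟩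

end Nat

namespace ZMod

variable (n : ℕ) [NeZero n]

theorem le_card_iff_eq_univ {S : Finset (ZMod n)} : n ≤ #S ↔ S = univ := by
  rw [← card_eq_iff_eq_univ, ZMod.card]
  exact ⟨fun h => le_antisymm ((card_le_univ S).trans (ZMod.card n).le) h, ge_of_eq⟩

theorem sum_univ_eq : ∑ g : ZMod n, g = ((n * (n - 1) / 2 : ℕ) : ZMod n) := by
  rw [← sum_range_id, Nat.cast_sum]
  exact sum_nbij' val (↑) (fun g _ => mem_range.2 (val_lt g)) (fun _ _ => mem_univ _)
    (fun g _ => natCast_zmod_val g) (fun i hi => val_cast_of_lt (mem_range.1 hi))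
    (fun g _ => (natCast_zmod_val g).symm)

theorem exists_sum_univ_eq_two_nsmul_iff : (∃ c : ZMod n, ∑ g, g = 2 • c) ↔ n % 4 ≠ 2 := by
  rw [sum_univ_eq]
  constructor
  · rintro ⟨c, hc⟩ h4
    have h2 : 2 ∣ n := by omega
    have hmod2 := congrArg (castHom h2 (ZMod 2)) hc
    rw [map_natCast, map_nsmul, two_nsmul, CharTwo.add_self_eq_zero, natCast_eq_zero_iff_even] at hmod2
    exact Nat.not_even_iff_odd.2 (Nat.odd_mul_pred_div_two_of_mod_four_eq_two h4) hmod2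
  · intro h4
    rcases Nat.even_or_odd n with heven | hodd
    · refine ⟨(n / 4 * (n - 1) : ℕ), ?_⟩
      rw [Nat.mul_pred_div_two_eq_of_four_dvd (by have := Nat.even_iff.1 heven; omega), Nat.cast_mul,
        two_nsmul, ← two_mul, Nat.cast_ofNat]
    · exact ⟨0, by rw [smul_zero, natCast_eq_zero_iff]; exact Nat.dvd_mul_pred_div_two_of_odd hodd⟩

end ZMod

open Classical in
theorem harborthPM_eq_ite (n : ℕ) [NeZero n] :
    harborthPM n = if HasSignedZeroSum (univ : Finset (ZMod n)) then n else n + 1 := by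
  set P := {ℓ : ℕ | ∀ S : Finset (ZMod n), ℓ ≤ #S → ∃ T ⊆ S, #T = n ∧ HasSignedZeroSum T}
  have lower : ∀ ℓ ∈ P, n ≤ ℓ := by
    intro ℓ hℓ
    by_contra! hlt
    obtain ⟨S, -, hS⟩ := exists_subset_card_eq (s := (univ : Finset (ZMod n))) (n := ℓ)
      (by rw [card_univ, ZMod.card]; exact hlt.le)
    obtain ⟨T, hTS, hT, -⟩ := hℓ S hS.ge
    have := card_le_card hTS
    omega
  have mem_self : n ∈ P ↔ HasSignedZeroSum (univ : Finset (ZMod n)) := by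
    refine ⟨fun h => ?_, fun h S hS => ?_⟩
    · obtain ⟨T, -, hT, hT0⟩ := h univ (by rw [card_univ, ZMod.card])
      rwa [(ZMod.le_card_iff_eq_univ n).1 hT.ge] at hT0
    · rw [(ZMod.le_card_iff_eq_univ n).1 hS]
      exact ⟨univ, subset_rfl, by rw [card_univ, ZMod.card], h⟩
  have succ_mem : n + 1 ∈ P := fun S hS => by
    have := (card_le_univ S).trans (ZMod.card n).le
    omega
  change sInf P = _
  split_ifs with h
  · exact IsLeast.csInf_eq ⟨mem_self.2 h, lower⟩
  · exact IsLeast.csInf_eq ⟨succ_mem, fun ℓ hℓ =>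
      (lower ℓ hℓ).lt_of_ne fun e => h (mem_self.1 (e ▸ hℓ))⟩

theorem stmt_4 (n : ℕ) (hn : 0 < n) :
    (n % 4 = 2 → harborthPM n = n + 1) ∧ (n % 4 ≠ 2 → harborthPM n = n) := by
  have : NeZero n := ⟨hn.ne'⟩
  rw [harborthPM_eq_ite, hasSignedZeroSum_univ_iff, ZMod.exists_sum_univ_eq_two_nsmul_iff]
  exact ⟨fun h => if_neg (not_not.2 h), fun h => if_pos h⟩
end

section
/- Let G be a finite abelian group of odd order and S a sequence over G. Then the number of distinct plus-minus weighted sums of S equals |Σ⁰(S)|, and this is at least 1 + |supp(S) \ {0}|, where supp(S) is the set of distinct elements appearing in S. -/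
/-!
Writing `T = ∑ i, g i`, the sign vector that is `+1` exactly on an index set `I` gives the weighted sum
`2 • ∑ i ∈ I, g i - T`, so the plus-minus weighted sums are the image of the subsums under the
affine map `x ↦ 2 • x - T`. When `|G|` is odd this map is injective, so both sets have the same
size. The subsums contain `0` and every term `g i` (take `I = ∅` and `I = {i}`).
-/

open Finset

section

variable {ι G : Type*} [Fintype ι] [AddCommGroup G]

def subsums (g : ι → G) : Set G :=
  {x | ∃ I : Finset ι, x = ∑ i ∈ I, g i}

def plusMinusSums (g : ι → G) : Set G :=
  {x | ∃ ε : ι → ℤ, (∀ i, ε i = 1 ∨ ε i = -1) ∧ x = ∑ i, ε i • g i}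

lemma subsums_finite (g : ι → G) : (subsums g).Finite :=
  (Set.finite_range fun I : Finset ι => ∑ i ∈ I, g i).subset fun _ ⟨I, hI⟩ => ⟨I, hI.symm⟩

lemma sum_sign_smul_eq [DecidableEq ι] (g : ι → G) (I : Finset ι) :
    ∑ i, (if i ∈ I then (1 : ℤ) else -1) • g i = 2 • ∑ i ∈ I, g i - ∑ i, g i := by
  have hsplit := sum_filter_add_sum_filter_not univ (· ∈ I) g
  simp only [ite_smul, one_smul, neg_smul, sum_ite, sum_neg_distrib] at hsplit ⊢
  rw [filter_univ_mem] at hsplit ⊢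
  rw [← hsplit]
  abel

lemma plusMinusSums_eq_image (g : ι → G) :
    plusMinusSums g = (fun x => 2 • x - ∑ i, g i) '' subsums g := by
  classical
  ext x
  constructor
  · rintro ⟨ε, hε, rfl⟩
    refine ⟨∑ i ∈ univ.filter (ε · = 1), g i, ⟨_, rfl⟩, ?_⟩
    dsimp only
    rw [← sum_sign_smul_eq g]
    refine sum_congr rfl fun i _ => ?_
    rcases hε i with h | h <;> simp [h]
  · rintro ⟨_, ⟨I, rfl⟩, rfl⟩
    exact ⟨fun i => if i ∈ I then 1 else -1, fun i => by by_cases h : i ∈ I <;> simp [h],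
      (sum_sign_smul_eq g I).symm⟩

lemma ncard_plusMinusSums_of_odd [Finite G] (hodd : Odd (Nat.card G)) (g : ι → G) :
    (plusMinusSums g).ncard = (subsums g).ncard := by
  have hinj : Function.Injective (fun x : G => 2 • x - ∑ i, g i) := sub_left_injective.comp
    (Nat.Coprime.nsmul_right_bijective (Nat.coprime_two_right.mpr hodd)).injective
  rw [plusMinusSums_eq_image, Set.ncard_image_of_injective _ hinj]

omit [Fintype ι] in
lemma insert_zero_range_subset_subsums (g : ι → G) : insert 0 (Set.range g) ⊆ subsums g := by
  classical
  rintro _ (rfl | ⟨i, rfl⟩)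
  · exact ⟨∅, by simp⟩
  · exact ⟨{i}, by simp⟩

lemma one_add_ncard_range_diff_zero_le (g : ι → G) :
    1 + (Set.range g \ {0}).ncard ≤ (subsums g).ncard := by
  calc 1 + (Set.range g \ {0}).ncard
      = (insert 0 (Set.range g \ {0})).ncard := by
        rw [Set.ncard_insert_of_notMem (by simp) (Set.toFinite _), add_comm]
    _ = (insert 0 (Set.range g)).ncard := by rw [Set.insert_sdiff_singleton]
    _ ≤ (subsums g).ncard :=
        Set.ncard_le_ncard (insert_zero_range_subset_subsums g) (subsums_finite g)

end

theorem stmt_8 (G : Type*) [AddCommGroup G] [Fintype G]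
    (hodd : Odd (Fintype.card G)) (ℓ : ℕ) (g : Fin ℓ → G) :
    ({x : G | ∃ ε : Fin ℓ → ℤ, (∀ i, ε i = 1 ∨ ε i = -1) ∧
        x = ∑ i, ε i • g i}).ncard =
      ({x : G | ∃ I : Finset (Fin ℓ), x = ∑ i ∈ I, g i}).ncard ∧
    1 + ((Set.range g) \ {0}).ncard ≤
      ({x : G | ∃ I : Finset (Fin ℓ), x = ∑ i ∈ I, g i}).ncard := by
  rw [← Nat.card_eq_fintype_card] at hodd
  exact ⟨ncard_plusMinusSums_of_odd hodd g, one_add_ncard_range_diff_zero_le g⟩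
end

section
/- For every n ≥ 2, the Harborth constant of G = C_2 ⊕ C_{2n} satisfies: g(G) = 2n + 3 if n is odd and g(G) = 2n + 2 if n is even. -/
/-!
Write `σ = ∑ S`. A `2n`-subset of `S` with zero sum is the complement of a `(#S - 2n)`-subset
with sum `σ`, so the upper bounds ask for two or three distinct elements of `S` summing to `σ`.
The tool is a pairing bound: if no two distinct elements of `S ⊆ X` sum to `t`, then `a ↦ t - a`
maps the elements of `S` with `a + a ≠ t` injectively into `X \ S`, whence
`2 #S ≤ #X + #{a ∈ X | a + a = t}`.

For `#S = 2n + 3`, take `x ∈ S` outside the coset of `σ` modulo `0 × C₂ₙ`; then `σ - x` is not a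
double, and the other `2n + 2` elements contain a pair summing to it. For `#S = 2n + 2` and `n`
even, suppose no pair sums to `σ`. Then `σ` is a double (else `2 #S ≤ 4n`), so `a ↦ σ - a`
preserves both cosets of `0 × C₂ₙ`, each containing at most two doubles; hence each coset meets
`S` in exactly `n + 1` elements, and `σ.1 = n + 1 = 1`, contradicting `σ.1 = 0`.

For the lower bounds, `0 × C₂ₙ ∪ {(1, 0)}` has sum `(1, n)`, which it does not contain, and for
odd `n` the set `{(0, i), (1, -i) | 0 ≤ i ≤ n}` has sum `(n + 1) • (1, 0) = 0` but no two distinct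
elements summing to zero.
-/

/-- The (classical) Harborth constant of `C₂ ⊕ C₂ₙ`: the smallest `ℓ` such that
every subset of `ZMod 2 × ZMod (2n)` of size at least `ℓ` has a subset of size
`2n` (= the exponent) summing to zero. -/
noncomputable def harborthC2C2n (n : ℕ) : ℕ :=
  sInf {ℓ : ℕ | ∀ S : Finset (ZMod 2 × ZMod (2 * n)), ℓ ≤ S.card →
    ∃ T ⊆ S, T.card = 2 * n ∧ ∑ g ∈ T, g = 0}

open Finset

section ZeroSum

variable {G : Type*} [AddCommGroup G]

def HasZeroSumSubset (S : Finset G) (m : ℕ) : Prop :=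
  ∃ T ⊆ S, #T = m ∧ ∑ g ∈ T, g = 0

lemma HasZeroSumSubset.mono {S S' : Finset G} {m : ℕ} (h : HasZeroSumSubset S m)
    (hSS' : S ⊆ S') : HasZeroSumSubset S' m :=
  let ⟨T, hTS, hT⟩ := h
  ⟨T, hTS.trans hSS', hT⟩

variable [DecidableEq G]

lemma hasZeroSumSubset_iff {S : Finset G} {m k : ℕ} (h : m + k = #S) :
    HasZeroSumSubset S m ↔ ∃ R ⊆ S, #R = k ∧ ∑ g ∈ R, g = ∑ g ∈ S, g := by
  constructor
  · rintro ⟨T, hTS, hT, hT0⟩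
    refine ⟨S \ T, sdiff_subset, by rw [card_sdiff_of_subset hTS]; omega, ?_⟩
    rw [sum_sdiff_eq_sub hTS, hT0, sub_zero]
  · rintro ⟨R, hRS, hR, hRσ⟩
    refine ⟨S \ R, sdiff_subset, by rw [card_sdiff_of_subset hRS]; omega, ?_⟩
    rw [sum_sdiff_eq_sub hRS, hRσ, sub_self]

lemma two_mul_card_le_of_forall_add_ne {t : G} {S X : Finset G} (hSX : S ⊆ X)
    (hX : ∀ a ∈ X, t - a ∈ X) (hS : ∀ a ∈ S, ∀ b ∈ S, a ≠ b → a + b ≠ t) :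
    2 * #S ≤ #X + #{a ∈ X | a + a = t} := by
  have hfree : #{a ∈ S | ¬a + a = t} ≤ #(X \ S) := by
    refine card_le_card_of_injOn (t - ·) (fun a ha => ?_) fun a _ b _ hab => sub_right_injective hab
    simp only [coe_filter, Set.mem_ofPred_eq, coe_sdiff, Set.mem_sdiff, mem_coe] at ha ⊢
    refine ⟨hX a (hSX ha.1), fun hta => ?_⟩
    rcases eq_or_ne a (t - a) with hat | hat
    · exact ha.2 (by nth_rw 2 [hat]; abel)
    · exact hS a ha.1 _ hta hat (by abel)
  have hfix : #{a ∈ S | a + a = t} ≤ #{a ∈ X | a + a = t} :=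
    card_le_card (filter_subset_filter _ hSX)
  have hsplit := card_filter_add_card_filter_not (s := S) (fun a => a + a = t)
  have := card_le_card hSX
  rw [card_sdiff_of_subset hSX] at hfree
  omega

lemma exists_pair_sum_eq_of_lt_two_mul_card {t : G} {S X : Finset G} (hSX : S ⊆ X)
    (hX : ∀ a ∈ X, t - a ∈ X) (hlt : #X + #{a ∈ X | a + a = t} < 2 * #S) :
    ∃ a ∈ S, ∃ b ∈ S, a ≠ b ∧ a + b = t := by
  by_contra! h
  exact (two_mul_card_le_of_forall_add_ne hSX hX h).not_gt hlt

lemma card_filter_add_self_eq_le_two [Fintype G] [IsAddCyclic G] (c : G) :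
    #{y | y + y = c} ≤ 2 := by
  obtain ⟨y₀, hy₀⟩ | hempty := em (∃ y₀, y₀ + y₀ = c)
  · calc #{y | y + y = c} ≤ #{z : G | 2 • z = 0} :=
          card_le_card_of_injOn (· - y₀) (fun y hy => by
            simp only [coe_filter, Set.mem_ofPred_eq, mem_univ, true_and] at hy ⊢
            rw [two_nsmul, sub_add_sub_comm, hy, hy₀, sub_self])
            fun _ _ _ _ h => sub_left_injective h
      _ ≤ 2 := IsAddCyclic.card_nsmul_eq_zero_le two_pos
  · push Not at hempty
    simp [filter_false_of_mem fun y _ => hempty y]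

end ZeroSum

lemma sInf_eq_of_card_eq {α : Type*} {P : Finset α → Prop} {m : ℕ}
    (hmono : ∀ S S', S ⊆ S' → P S → P S') (hup : ∀ S, #S = m + 1 → P S)
    (hlow : ∃ S, #S = m ∧ ¬P S) :
    sInf {ℓ : ℕ | ∀ S : Finset α, ℓ ≤ #S → P S} = m + 1 := by
  have hmem : ∀ S : Finset α, m + 1 ≤ #S → P S := fun S hS =>
    let ⟨S', hS'S, hS'⟩ := exists_subset_card_eq hS
    hmono S' S hS'S (hup S' hS')
  obtain ⟨S₀, hS₀, hP⟩ := hlow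
  refine le_antisymm (Nat.sInf_le hmem) (le_csInf ⟨_, hmem⟩ fun ℓ hℓ => ?_)
  by_contra! hlt
  exact hP (hℓ S₀ (by omega))

section ZModTwoProd

variable {H : Type*}

lemma fst_sum_eq_card_filter [AddCommMonoid H] (S : Finset (ZMod 2 × H)) :
    (∑ g ∈ S, g).1 = #{a ∈ S | a.1 = 1} := by
  have hboole : ∀ x : ZMod 2, x = if x = 1 then 1 else 0 := by decide
  rw [Prod.fst_sum, ← sum_boole]
  exact sum_congr rfl fun a _ => hboole a.1

lemma add_self_ne_of_fst_ne_zero [AddCommGroup H] {t : ZMod 2 × H} (ht : t.1 ≠ 0)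
    (a : ZMod 2 × H) : a + a ≠ t := fun h =>
  ht (by rw [← h, Prod.fst_add, CharTwo.add_self_eq_zero])

end ZModTwoProd

section UpperBound

variable {n : ℕ} [NeZero n]

lemma card_univ_zmod_two_prod : #(univ : Finset (ZMod 2 × ZMod (2 * n))) = 4 * n := by
  rw [card_univ, Fintype.card_prod, ZMod.card, ZMod.card]
  ring

lemma card_filter_fst_eq (i : ZMod 2) : #{a : ZMod 2 × ZMod (2 * n) | a.1 = i} = 2 * n := by
  rw [show ({a | a.1 = i} : Finset (ZMod 2 × ZMod (2 * n))) = {i} ×ˢ univ by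
    ext ⟨u, v⟩; simp [eq_comm]]
  simp

lemma card_filter_fst_eq_add_self_eq_le_two (i : ZMod 2) (t : ZMod 2 × ZMod (2 * n)) :
    #{a ∈ ({a | a.1 = i} : Finset (ZMod 2 × ZMod (2 * n))) | a + a = t} ≤ 2 :=
  calc _ ≤ #{y : ZMod (2 * n) | y + y = t.2} := by
        refine card_le_card_of_injOn Prod.snd (fun a ha => ?_) fun a ha b hb hab => ?_
        · simp only [coe_filter, mem_filter, mem_univ, true_and, Set.mem_ofPred_eq] at ha ⊢
          rw [← Prod.snd_add, ha.2]
        · simp only [coe_filter, mem_filter, mem_univ, true_and, Set.mem_ofPred_eq] at ha hb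
          exact Prod.ext (ha.1.trans hb.1.symm) hab
    _ ≤ 2 := card_filter_add_self_eq_le_two _

lemma exists_three_sum_eq_sum {S : Finset (ZMod 2 × ZMod (2 * n))} (hS : #S = 2 * n + 3) :
    ∃ R ⊆ S, #R = 3 ∧ ∑ g ∈ R, g = ∑ g ∈ S, g := by
  set σ := ∑ g ∈ S, g
  obtain ⟨x, hxS, hx⟩ : ∃ x ∈ S, x.1 ≠ σ.1 := by
    by_contra! h
    have := card_le_card fun a ha => mem_filter.2 ⟨mem_univ a, h a ha⟩
    rw [card_filter_fst_eq] at this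
    omega
  have hfix : #{a ∈ univ | a + a = σ - x} = 0 := card_eq_zero.2 <| filter_false_of_mem fun a _ =>
    add_self_ne_of_fst_ne_zero (by rw [Prod.fst_sub, sub_ne_zero]; exact hx.symm) a
  obtain ⟨a, ha, b, hb, hab, habσ⟩ := exists_pair_sum_eq_of_lt_two_mul_card
    (subset_univ (S.erase x)) (fun _ _ => mem_univ _)
    (by rw [hfix, card_univ_zmod_two_prod, card_erase_of_mem hxS]; omega)
  have hxab : x ∉ ({a, b} : Finset _) := by
    simp only [mem_insert, mem_singleton, not_or]
    exact ⟨(ne_of_mem_erase ha).symm, (ne_of_mem_erase hb).symm⟩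
  refine ⟨{x, a, b}, ?_, ?_, ?_⟩
  · simp only [insert_subset_iff, singleton_subset_iff]
    exact ⟨hxS, mem_of_mem_erase ha, mem_of_mem_erase hb⟩
  · rw [card_insert_of_notMem hxab, card_pair hab]
  · rw [sum_insert hxab, sum_pair hab, habσ, add_sub_cancel]

lemma exists_two_sum_eq_sum (hev : Even n) {S : Finset (ZMod 2 × ZMod (2 * n))}
    (hS : #S = 2 * n + 2) : ∃ R ⊆ S, #R = 2 ∧ ∑ g ∈ R, g = ∑ g ∈ S, g := by
  set σ := ∑ g ∈ S, g
  suffices ∃ a ∈ S, ∃ b ∈ S, a ≠ b ∧ a + b = σ by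
    obtain ⟨a, ha, b, hb, hab, habσ⟩ := this
    exact ⟨{a, b}, by simp [insert_subset_iff, ha, hb], card_pair hab, by rw [sum_pair hab, habσ]⟩
  by_contra! h
  by_cases hσ : σ.1 = 0
  · have hcoset (i : ZMod 2) : #{a ∈ S | a.1 = i} ≤ n + 1 := by
      have := two_mul_card_le_of_forall_add_ne (t := σ) (S := {a ∈ S | a.1 = i})
        (X := {a | a.1 = i}) (filter_subset_filter _ (subset_univ S))
        (fun a ha => by
          simp only [mem_filter, mem_univ, true_and] at ha ⊢
          rw [Prod.fst_sub, hσ, zero_sub, ZMod.neg_eq_self_mod_two, ha])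
        (fun a ha b hb => h a (mem_filter.1 ha).1 b (mem_filter.1 hb).1)
      have := card_filter_fst_eq_add_self_eq_le_two i σ
      rw [card_filter_fst_eq] at *
      omega
    have hsplit : #{a ∈ S | a.1 = 1} + #{a ∈ S | a.1 = 0} = #S := by
      rw [← card_filter_add_card_filter_not (s := S) (fun a => a.1 = 1)]
      congr 2
      exact filter_congr fun a _ => by generalize a.1 = x; revert x; decide
    have hone : #{a ∈ S | a.1 = 1} = n + 1 := by
      have := hcoset 0
      have := hcoset 1
      omega
    have := fst_sum_eq_card_filter S
    rw [hσ, hone, Nat.cast_add_one, eq_comm, ← Nat.cast_add_one,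
      ZMod.natCast_eq_zero_iff_even] at this
    exact Nat.not_even_iff_odd.2 hev.add_one this
  · have := two_mul_card_le_of_forall_add_ne (subset_univ S) (fun _ _ => mem_univ _) h
    rw [card_univ_zmod_two_prod, filter_false_of_mem fun a _ => add_self_ne_of_fst_ne_zero hσ a,
      card_empty] at this
    omega

end UpperBound

section LowerBound

variable {n : ℕ}

def lowerHalf (n : ℕ) : Finset (ZMod (2 * n)) := (range (n + 1)).image Nat.cast

lemma card_lowerHalf [NeZero n] : #(lowerHalf n) = n + 1 := by
  have := NeZero.ne n
  rw [lowerHalf, card_image_of_injOn, card_range]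
  intro i hi j hj hij
  simp only [coe_range, Set.mem_Iio] at hi hj
  simpa [ZMod.val_cast_of_lt (show i < 2 * n by omega),
    ZMod.val_cast_of_lt (show j < 2 * n by omega)] using congrArg ZMod.val hij

lemma eq_of_add_eq_zero_of_mem_lowerHalf {a b : ZMod (2 * n)} (ha : a ∈ lowerHalf n)
    (hb : b ∈ lowerHalf n) (hab : a + b = 0) : a = b := by
  obtain ⟨i, hi, rfl⟩ := mem_image.1 ha
  obtain ⟨j, hj, rfl⟩ := mem_image.1 hb
  rw [mem_range] at hi hj
  rw [← Nat.cast_add, ZMod.natCast_eq_zero_iff] at hab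
  rcases lt_or_ge (i + j) (2 * n) with hlt | hge
  · have := Nat.eq_zero_of_dvd_of_lt hab hlt
    congr 1
    omega
  · congr 1
    omega

def extremalSetOdd (n : ℕ) : Finset (ZMod 2 × ZMod (2 * n)) :=
  (lowerHalf n).map (Function.Embedding.sectR (0 : ZMod 2) _) ∪
    (lowerHalf n).map ((Equiv.neg _).toEmbedding.trans (Function.Embedding.sectR (1 : ZMod 2) _))

lemma disjoint_extremalSetOdd :
    Disjoint ((lowerHalf n).map (Function.Embedding.sectR (0 : ZMod 2) _))
      ((lowerHalf n).map
        ((Equiv.neg _).toEmbedding.trans (Function.Embedding.sectR (1 : ZMod 2) _))) := by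
  simp only [disjoint_left, mem_map]
  rintro _ ⟨y, -, rfl⟩ ⟨z, -, h⟩
  exact zero_ne_one (congrArg Prod.fst h).symm

lemma card_extremalSetOdd [NeZero n] : #(extremalSetOdd n) = 2 * n + 2 := by
  rw [extremalSetOdd, card_union_of_disjoint disjoint_extremalSetOdd, card_map, card_map,
    card_lowerHalf]
  ring

lemma sum_extremalSetOdd [NeZero n] (hodd : Odd n) : ∑ g ∈ extremalSetOdd n, g = 0 := by
  rw [extremalSetOdd, sum_union disjoint_extremalSetOdd, sum_map, sum_map, ← sum_add_distrib]
  simp only [Function.Embedding.sectR_apply, Function.Embedding.trans_apply,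
    Equiv.coe_toEmbedding, Equiv.neg_apply, Prod.mk_add_mk, zero_add, add_neg_cancel, sum_const,
    card_lowerHalf, Prod.smul_mk, smul_zero, nsmul_eq_mul, mul_one,
    ZMod.natCast_eq_zero_iff_even.2 hodd.add_one, Prod.mk_zero_zero]

lemma add_ne_zero_of_mem_extremalSetOdd {a b : ZMod 2 × ZMod (2 * n)}
    (ha : a ∈ extremalSetOdd n) (hb : b ∈ extremalSetOdd n) (hab : a ≠ b) : a + b ≠ 0 := by
  simp only [extremalSetOdd, mem_union, mem_map, Function.Embedding.sectR_apply,
    Function.Embedding.trans_apply, Equiv.coe_toEmbedding, Equiv.neg_apply] at ha hb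
  rcases ha with ⟨y, hy, rfl⟩ | ⟨y, hy, rfl⟩ <;> rcases hb with ⟨z, hz, rfl⟩ | ⟨z, hz, rfl⟩ <;>
    intro h
  · exact hab (by rw [eq_of_add_eq_zero_of_mem_lowerHalf hy hz (congrArg Prod.snd h)])
  · simpa using congrArg Prod.fst h
  · simpa using congrArg Prod.fst h
  · have hyz : y + z = 0 := eq_neg_iff_add_eq_zero.1 (neg_add_eq_zero.1 (congrArg Prod.snd h))
    exact hab (by rw [eq_of_add_eq_zero_of_mem_lowerHalf hy hz hyz])

lemma not_hasZeroSumSubset_extremalSetOdd [NeZero n] (hodd : Odd n) :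
    ¬HasZeroSumSubset (extremalSetOdd n) (2 * n) := by
  rw [hasZeroSumSubset_iff (k := 2) (by rw [card_extremalSetOdd]), sum_extremalSetOdd hodd]
  rintro ⟨R, hRS, hR, hR0⟩
  obtain ⟨a, b, hab, rfl⟩ := card_eq_two.1 hR
  rw [sum_pair hab] at hR0
  exact add_ne_zero_of_mem_extremalSetOdd (hRS (mem_insert_self a {b}))
    (hRS (mem_insert_of_mem (mem_singleton_self b))) hab hR0

lemma sum_univ_zmod_two_mul [NeZero n] : ∑ y : ZMod (2 * n), y = n := by
  have hrange : ∑ i ∈ range (2 * n), (i : ZMod (2 * n)) = ∑ y : ZMod (2 * n), y :=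
    sum_nbij' Nat.cast ZMod.val (fun _ _ => mem_univ _) (fun y _ => mem_range.2 (ZMod.val_lt y))
      (fun i hi => ZMod.val_cast_of_lt (mem_range.1 hi)) (fun y _ => ZMod.natCast_zmod_val y)
      fun _ _ => rfl
  obtain ⟨k, rfl⟩ : ∃ k, n = k + 1 := Nat.exists_eq_succ_of_ne_zero (NeZero.ne n)
  have hgauss : ∑ i ∈ range (2 * (k + 1)), i = 2 * (k + 1) * k + (k + 1) := by
    have := sum_range_id_mul_two (2 * (k + 1))
    rw [show 2 * (k + 1) - 1 = 2 * k + 1 by omega] at this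
    nlinarith
  rw [← hrange, ← Nat.cast_sum, hgauss, Nat.cast_add, Nat.cast_mul, ZMod.natCast_self, zero_mul,
    zero_add]

def extremalSetEven (n : ℕ) [NeZero n] : Finset (ZMod 2 × ZMod (2 * n)) :=
  insert (1, 0) (univ.map (Function.Embedding.sectR (0 : ZMod 2) _))

lemma one_zero_notMem_map_sectR [NeZero n] :
    ((1 : ZMod 2), (0 : ZMod (2 * n))) ∉ univ.map (Function.Embedding.sectR (0 : ZMod 2) _) := by
  simp

lemma card_extremalSetEven [NeZero n] : #(extremalSetEven n) = 2 * n + 1 := by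
  rw [extremalSetEven, card_insert_of_notMem one_zero_notMem_map_sectR, card_map, card_univ,
    ZMod.card]

lemma sum_extremalSetEven [NeZero n] :
    ∑ g ∈ extremalSetEven n, g = (1, (n : ZMod (2 * n))) := by
  rw [extremalSetEven, sum_insert one_zero_notMem_map_sectR, sum_map]
  ext
  · simp [Prod.fst_sum]
  · simp [Prod.snd_sum, sum_univ_zmod_two_mul]

lemma not_hasZeroSumSubset_extremalSetEven [NeZero n] :
    ¬HasZeroSumSubset (extremalSetEven n) (2 * n) := by
  rw [hasZeroSumSubset_iff (k := 1) (by rw [card_extremalSetEven]), sum_extremalSetEven]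
  rintro ⟨R, hRS, hR, hRσ⟩
  obtain ⟨a, rfl⟩ := card_eq_one.1 hR
  rw [sum_singleton] at hRσ
  have ha := hRS (mem_singleton_self a)
  simp only [extremalSetEven, hRσ, mem_insert, Prod.mk.injEq, true_and, mem_map,
    Function.Embedding.sectR_apply, zero_ne_one, false_and, and_false, exists_false, or_false,
    ZMod.natCast_eq_zero_iff] at ha
  have := NeZero.ne n
  exact absurd (Nat.le_of_dvd (by omega) ha) (by omega)

end LowerBound

theorem stmt_12 (n : ℕ) (hn : 2 ≤ n) :
    (Odd n → harborthC2C2n n = 2 * n + 3) ∧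
    (Even n → harborthC2C2n n = 2 * n + 2) := by
  have : NeZero n := ⟨by omega⟩
  have hmono (S S' : Finset (ZMod 2 × ZMod (2 * n))) (hSS' : S ⊆ S')
      (hS : HasZeroSumSubset S (2 * n)) : HasZeroSumSubset S' (2 * n) := hS.mono hSS'
  constructor
  · intro hodd
    refine sInf_eq_of_card_eq (m := 2 * n + 2) hmono (fun S hS => ?_)
      ⟨_, card_extremalSetOdd, not_hasZeroSumSubset_extremalSetOdd hodd⟩
    exact (hasZeroSumSubset_iff (by omega)).2 (exists_three_sum_eq_sum hS)
  · intro hev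
    refine sInf_eq_of_card_eq (m := 2 * n + 1) hmono (fun S hS => ?_)
      ⟨_, card_extremalSetEven, not_hasZeroSumSubset_extremalSetEven⟩
    exact (hasZeroSumSubset_iff (by omega)).2 (exists_two_sum_eq_sum hev hS)
end

section
/- Let n ≥ 3 and G = C_2 ⊕ C_{2n} with basis (e_1, e_2), ord(e_1) = 2, ord(e_2) = 2n. Let S be a squarefree sequence over G of length 2n+1 with support contained in the union of exactly three of the four cosets of 2G in G, such that each of these three cosets contains an odd number of elements of S. Then S has no plus-minus weighted zero-subsum of length 2n. -/
/-!
Reduce modulo `2G`: the map `ψ : G → G/2G ≅ C₂ × C₂` is a homomorphism into a group of exponent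
two, so it forgets the signs, and a weighted zero-subsum `T` satisfies `∑_{g ∈ T} ψ g = 0`.
On the other hand, modulo two only the cosets met an odd number of times contribute to
`∑_{g ∈ S} ψ g`, so this sum is the sum of the three elements of `C₂ × C₂` other than `c`,
which is `c`. Hence the single element of `S \ T` lies in the coset `c`, which `S` avoids.
-/

open Finset

section ExponentTwo

variable {G H : Type*} [AddCommGroup G] [AddCommGroup H]

theorem nsmul_eq_ite_odd_of_add_self (h2 : ∀ x : H, x + x = 0) (k : ℕ) (x : H) :
    k • x = if Odd k then x else 0 := by
  obtain ⟨m, rfl | rfl⟩ := Nat.even_or_odd' k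
  · simp [mul_nsmul', two_nsmul, h2]
  · simp [add_nsmul, mul_nsmul', two_nsmul, h2]

theorem map_sum_sign_smul_of_add_self (h2 : ∀ x : H, x + x = 0) (f : G →+ H) {ι : Type*}
    (T : Finset ι) (v : ι → G) (ε : ι → ℤ) (hε : ∀ i ∈ T, ε i = 1 ∨ ε i = -1) :
    f (∑ i ∈ T, ε i • v i) = ∑ i ∈ T, f (v i) := by
  rw [map_sum]
  refine sum_congr rfl fun i hi => ?_
  rcases hε i hi with h | h <;> simp [h, neg_eq_of_add_eq_zero_right (h2 _)]

theorem sum_eq_sum_filter_odd_card_fiber [Fintype H] [DecidableEq H]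
    (h2 : ∀ x : H, x + x = 0) {α : Type*} (S : Finset α) (ψ : α → H) :
    ∑ g ∈ S, ψ g = ∑ d with Odd #{g ∈ S | ψ g = d}, d := by
  rw [← sum_fiberwise S ψ ψ, sum_filter]
  refine sum_congr rfl fun d _ => ?_
  rw [sum_congr rfl fun g hg => (mem_filter.mp hg).2, sum_const,
    nsmul_eq_ite_odd_of_add_self h2]

end ExponentTwo

theorem ZMod.sum_univ_erase_two_prod_two (c : ZMod 2 × ZMod 2) :
    ∑ d ∈ univ.erase c, d = c := by
  revert c
  decide

theorem stmt_13_general (n : ℕ)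
    (ψ : ZMod 2 × ZMod (2 * n) → ZMod 2 × ZMod 2)
    (hψ : ∀ g, ψ g = (g.1, ZMod.castHom (dvd_mul_right 2 n) (ZMod 2) g.2))
    (S : Finset (ZMod 2 × ZMod (2 * n))) (hcard : S.card = 2 * n + 1)
    -- the support of `S` is contained in the union of the three cosets of `2G`
    -- distinct from the coset `c`, and each of these three cosets contains an
    -- odd number of elements of `S`
    (c : ZMod 2 × ZMod 2) (hc : ∀ g ∈ S, ψ g ≠ c)
    (hodd : ∀ d : ZMod 2 × ZMod 2, d ≠ c →
      Odd (S.filter (fun g => ψ g = d)).card) :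
    ¬ ∃ T ⊆ S, T.card = 2 * n ∧
      ∃ ε : ZMod 2 × ZMod (2 * n) → ℤ, (∀ g ∈ T, ε g = 1 ∨ ε g = -1) ∧
        ∑ g ∈ T, ε g • g = 0 := by
  rintro ⟨T, hTS, hTcard, ε, hε, hsum⟩
  have h2 : ∀ x : ZMod 2 × ZMod 2, x + x = 0 := by decide
  let f : ZMod 2 × ZMod (2 * n) →+ ZMod 2 × ZMod 2 :=
    (AddMonoidHom.id _).prodMap (ZMod.castHom (dvd_mul_right 2 n) (ZMod 2)).toAddMonoidHom
  obtain rfl : ψ = f := funext hψ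
  have hT : ∑ g ∈ T, f g = 0 := by
    have h := map_sum_sign_smul_of_add_self h2 f T (fun g => g) ε hε
    rwa [hsum, map_zero, eq_comm] at h
  have hS : ∑ g ∈ S, f g = c := by
    rw [sum_eq_sum_filter_odd_card_fiber h2, ← ZMod.sum_univ_erase_two_prod_two c]
    congr 1
    ext d
    by_cases hd : d = c
    · simp [hd, filter_eq_empty_iff.mpr hc]
    · simp [hd, hodd d hd]
  obtain ⟨s, hs⟩ : ∃ s, S \ T = {s} := card_eq_one.mp <| by
    rw [card_sdiff_of_subset hTS, hcard, hTcard]; omega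
  have hsS : s ∈ S := (mem_sdiff.mp (hs ▸ mem_singleton_self s)).1
  have hsplit := sum_sdiff hTS (f := f)
  rw [hs, sum_singleton, hT, add_zero, hS] at hsplit
  exact hc s hsS hsplit

theorem stmt_13 (n : ℕ) (hn : 3 ≤ n)
    (ψ : ZMod 2 × ZMod (2 * n) → ZMod 2 × ZMod 2)
    (hψ : ∀ g, ψ g = (g.1, ZMod.castHom (dvd_mul_right 2 n) (ZMod 2) g.2))
    (S : Finset (ZMod 2 × ZMod (2 * n))) (hcard : S.card = 2 * n + 1)
    -- the support of `S` is contained in the union of the three cosets of `2G`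
    -- distinct from the coset `c`, and each of these three cosets contains an
    -- odd number of elements of `S`
    (c : ZMod 2 × ZMod 2) (hc : ∀ g ∈ S, ψ g ≠ c)
    (hodd : ∀ d : ZMod 2 × ZMod 2, d ≠ c →
      Odd (S.filter (fun g => ψ g = d)).card) :
    ¬ ∃ T ⊆ S, T.card = 2 * n ∧
      ∃ ε : ZMod 2 × ZMod (2 * n) → ℤ, (∀ g ∈ T, ε g = 1 ∨ ε g = -1) ∧
        ∑ g ∈ T, ε g • g = 0 :=
  stmt_13_general n ψ hψ S hcard c hc hodd
end

section
/- Let n ≥ 3 be even and G = C_2 ⊕ C_{2n} = ⟨e_1⟩ ⊕ ⟨e_2⟩ with ord(e_1) = 2, ord(e_2) = 2n. Let S be a subset of G of size 2n+1, written as S = S_0 ∪ (e_1 + S_1) with S_0, S_1 ⊆ ⟨e_2⟩, and let j ∈ {0,1} be the index with |S_j| odd. Then S has no zero-sum subset of size 2n if and only if σ(S_0) + σ(S_1) ∉ S_j, where σ denotes the sum of all elements. -/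
/-!
The complement of a zero-sum subset of size `|S| - 1` is a single element, which must equal
`σ(S)`; conversely removing `σ(S)` from `S` leaves a zero-sum subset. So `S` has a zero-sum subset
of size `2n` iff `σ(S) ∈ S`. Here `σ(S) = (|S₁| mod 2, σ(S₀) + σ(S₁))`, and its first coordinate is
`j`, so `σ(S) ∈ S` iff `σ(S₀) + σ(S₁) ∈ S_j`.
-/

open Finset

theorem Finset.exists_subset_card_eq_sum_eq_zero_iff_sum_mem {G : Type*} [AddCommGroup G]
    [DecidableEq G] {S : Finset G} {m : ℕ} (hS : #S = m + 1) :
    (∃ T ⊆ S, #T = m ∧ ∑ g ∈ T, g = 0) ↔ ∑ g ∈ S, g ∈ S := by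
  constructor
  · rintro ⟨T, hTS, hTcard, hTsum⟩
    obtain ⟨a, ha⟩ : ∃ a, S \ T = {a} := by
      rw [← card_eq_one, card_sdiff_of_subset hTS, hS, hTcard]
      omega
    have hsplit := sum_sdiff (f := fun g => g) hTS
    rw [ha, sum_singleton, hTsum, add_zero] at hsplit
    exact hsplit ▸ mem_sdiff.mp (ha ▸ mem_singleton_self a) |>.1
  · intro hmem
    refine ⟨S.erase (∑ g ∈ S, g), erase_subset _ _, ?_, ?_⟩
    · rw [card_erase_of_mem hmem, hS, Nat.add_sub_cancel]
    · rw [sum_erase_eq_sub hmem, sub_self]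

section Layers

variable {A B : Type*} [DecidableEq A] [DecidableEq B]

theorem Finset.disjoint_image_prodMk_of_ne {a b : A} (hab : a ≠ b) (s t : Finset B) :
    Disjoint (s.image fun x => (a, x)) (t.image fun x => (b, x)) := by
  simp only [disjoint_left, mem_image]
  rintro _ ⟨x, -, rfl⟩ ⟨y, -, hyx⟩
  exact hab (congrArg Prod.fst hyx).symm

theorem Finset.card_image_prodMk (a : A) (s : Finset B) : #(s.image fun x => (a, x)) = #s :=
  card_image_of_injective s fun _ _ h => (Prod.mk.inj h).2

theorem Finset.sum_image_prodMk [AddCommMonoid A] [AddCommMonoid B] (a : A) (s : Finset B) :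
    ∑ g ∈ s.image (fun x => (a, x)), g = (#s • a, ∑ x ∈ s, x) := by
  rw [sum_image fun _ _ _ _ h => (Prod.mk.inj h).2]
  ext <;> simp [Prod.fst_sum, Prod.snd_sum]

end Layers

theorem stmt_14_general (n : ℕ)
    (S₀ S₁ : Finset (ZMod (2 * n)))
    (S : Finset (ZMod 2 × ZMod (2 * n)))
    (hS : S = S₀.image (fun x => ((0 : ZMod 2), x)) ∪
              S₁.image (fun x => ((1 : ZMod 2), x)))
    (hcard : S₀.card + S₁.card = 2 * n + 1)
    (Sj : Finset (ZMod (2 * n)))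
    (hj : (Sj = S₀ ∧ Odd S₀.card) ∨ (Sj = S₁ ∧ Odd S₁.card)) :
    (¬ ∃ T ⊆ S, T.card = 2 * n ∧ ∑ g ∈ T, g = 0) ↔
      (∑ x ∈ S₀, x) + (∑ x ∈ S₁, x) ∉ Sj := by
  have hdisj := disjoint_image_prodMk_of_ne (zero_ne_one (α := ZMod 2)) S₀ S₁
  have hcardS : #S = 2 * n + 1 := by
    rw [hS, card_union_of_disjoint hdisj, card_image_prodMk, card_image_prodMk, hcard]
  rw [exists_subset_card_eq_sum_eq_zero_iff_sum_mem hcardS, hS, sum_union hdisj,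
    sum_image_prodMk, sum_image_prodMk, Prod.mk_add_mk, smul_zero, zero_add, nsmul_one]
  rcases hj with ⟨rfl, hodd⟩ | ⟨rfl, hodd⟩
  · have heven : (#S₁ : ZMod 2) = 0 := by
      rw [ZMod.natCast_eq_zero_iff_even]
      exact Nat.odd_add.mp (hcard ▸ odd_two_mul_add_one n) |>.mp hodd
    simp [heven]
  · simp [(ZMod.natCast_eq_one_iff_odd).mpr hodd]

theorem stmt_14 (n : ℕ) (hn : 3 ≤ n) (hneven : Even n)
    (S₀ S₁ : Finset (ZMod (2 * n)))
    (S : Finset (ZMod 2 × ZMod (2 * n)))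
    (hS : S = S₀.image (fun x => ((0 : ZMod 2), x)) ∪
              S₁.image (fun x => ((1 : ZMod 2), x)))
    (hcard : S₀.card + S₁.card = 2 * n + 1)
    (Sj : Finset (ZMod (2 * n)))
    (hj : (Sj = S₀ ∧ Odd S₀.card) ∨ (Sj = S₁ ∧ Odd S₁.card)) :
    (¬ ∃ T ⊆ S, T.card = 2 * n ∧ ∑ g ∈ T, g = 0) ↔
      (∑ x ∈ S₀, x) + (∑ x ∈ S₁, x) ∉ Sj :=
  stmt_14_general n S₀ S₁ S hS hcard Sj hj
end

section
/- Let n ≥ 3 be odd, G = C_2 ⊕ C_2 ⊕ C_n = ⟨f_1⟩ ⊕ ⟨f_2⟩ ⊕ ⟨e⟩ (ord f_1 = ord f_2 = 2, ord e = n). Let S_0, S_1, S_2, S_3 ⊆ ⟨e⟩ each of size (n+1)/2 such that each S_i contains exactly one of g, -g for every nonzero g ∈ ⟨e⟩ (and contains 0), and σ(S_0)+σ(S_1)+σ(S_2)+σ(S_3) = 0. Then for any h ∈ G, the set S = h + (S_0 ∪ (f_1+S_1) ∪ (f_2+S_2) ∪ (f_1+f_2+S_3)) of size 2n+2 has no subset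 of size 2n summing to 0. -/
open Finset

/-!
Translating by `-h`, it suffices to study `U = S₀ ∪ (f₁ + S₁) ∪ (f₂ + S₂) ∪ (f₁ + f₂ + S₃)`. It has
`4 · (n + 1) / 2 = 2n + 2` elements and sum `0`: each of `f₁`, `f₂` occurs in `2 · ((n + 1) / 2)` of its
elements, and its `Cₙ` part is `σ(S₀) + ⋯ + σ(S₃) = 0`. As `2n` kills `G`, `σ(S) = (2n + 2) • h = 2 • h`,
so a zero-sum subset of size `2n` would leave out two distinct elements `h + u`, `h + v` with `u + v = 0`.
Since `C₂ ⊕ C₂` has exponent `2`, `u` and `v` lie in the same piece `ε f₁ + δ f₂ + Sᵢ`, and then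
`Sᵢ ∩ -Sᵢ = {0}` forces `u = v`.
-/

section General

variable {M : Type*}

theorem sum_image_const_add [AddCancelCommMonoid M] [DecidableEq M] (h : M) (A : Finset M) :
    ∑ x ∈ A.image (h + ·), x = #A • h + ∑ x ∈ A, x := by
  rw [sum_image fun x _ y _ hxy => add_left_cancel hxy, sum_add_distrib, sum_const]

theorem exists_ne_add_eq_sum_of_sum_eq_zero [AddCommGroup M] [DecidableEq M] {S T : Finset M}
    (hTS : T ⊆ S) (hcard : #T + 2 = #S) (hT : ∑ x ∈ T, x = 0) :
    ∃ a ∈ S, ∃ b ∈ S, a ≠ b ∧ a + b = ∑ x ∈ S, x := by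
  obtain ⟨a, b, hab, hU⟩ := card_eq_two.mp (show #(S \ T) = 2 by rw [card_sdiff_of_subset hTS]; omega)
  have hsub : {a, b} ⊆ S := hU ▸ sdiff_subset
  refine ⟨a, hsub (mem_insert_self a _), b, hsub (mem_insert_of_mem (mem_singleton_self b)), hab, ?_⟩
  rw [← sum_sdiff hTS, hT, add_zero, hU, sum_pair hab]

theorem eq_of_add_eq_zero_of_mem [AddGroup M] {A : Finset M} (hA : ∀ g ∈ A, -g ∈ A → g = 0)
    {x y : M} (hx : x ∈ A) (hy : y ∈ A) (hxy : x + y = 0) : x = y := by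
  obtain rfl := eq_neg_of_add_eq_zero_right hxy
  rw [hA x hx hy, neg_zero]

end General

theorem two_mul_nsmul_eq_zero {n : ℕ} (g : ZMod 2 × ZMod 2 × ZMod n) : (2 * n) • g = 0 := by
  have h2 : ((2 * n : ℕ) : ZMod 2) = 0 := (ZMod.natCast_eq_zero_iff _ _).2 (dvd_mul_right 2 n)
  have hn : ((2 * n : ℕ) : ZMod n) = 0 := (ZMod.natCast_eq_zero_iff _ _).2 (dvd_mul_left n 2)
  obtain ⟨a, b, x⟩ := g
  simp only [Prod.smul_mk, nsmul_eq_mul, h2, hn, zero_mul, Prod.mk_zero_zero]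

section CosetUnion

variable {E : Type*} [DecidableEq E]

def cosetUnion (S₀ S₁ S₂ S₃ : Finset E) : Finset (ZMod 2 × ZMod 2 × E) :=
  S₀.image (fun x => (0, 0, x)) ∪ S₁.image (fun x => (1, 0, x)) ∪
    S₂.image (fun x => (0, 1, x)) ∪ S₃.image (fun x => (1, 1, x))

theorem sum_cosetUnion {M : Type*} [AddCommMonoid M] (S₀ S₁ S₂ S₃ : Finset E)
    (f : ZMod 2 × ZMod 2 × E → M) :
    ∑ u ∈ cosetUnion S₀ S₁ S₂ S₃, f u = ∑ x ∈ S₀, f (0, 0, x) + ∑ x ∈ S₁, f (1, 0, x) +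
      ∑ x ∈ S₂, f (0, 1, x) + ∑ x ∈ S₃, f (1, 1, x) := by
  rw [cosetUnion, sum_union, sum_union, sum_union, sum_image, sum_image, sum_image, sum_image] <;>
    grind [disjoint_left, Set.InjOn]

theorem card_cosetUnion (S₀ S₁ S₂ S₃ : Finset E) :
    #(cosetUnion S₀ S₁ S₂ S₃) = #S₀ + #S₁ + #S₂ + #S₃ := by
  simp only [card_eq_sum_ones, sum_cosetUnion]

theorem sum_id_cosetUnion [AddCommGroup E] (S₀ S₁ S₂ S₃ : Finset E) :
    ∑ u ∈ cosetUnion S₀ S₁ S₂ S₃, u =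
      (((#S₁ + #S₃ : ℕ) : ZMod 2), ((#S₂ + #S₃ : ℕ) : ZMod 2),
        ∑ x ∈ S₀, x + ∑ x ∈ S₁, x + ∑ x ∈ S₂, x + ∑ x ∈ S₃, x) := by
  rw [sum_cosetUnion]
  ext <;> simp [Prod.fst_sum, Prod.snd_sum]

theorem eq_of_add_eq_zero_of_mem_cosetUnion [AddCommGroup E] {S₀ S₁ S₂ S₃ : Finset E}
    (hA : ∀ A ∈ [S₀, S₁, S₂, S₃], ∀ g ∈ A, -g ∈ A → g = 0) {u v : ZMod 2 × ZMod 2 × E}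
    (hu : u ∈ cosetUnion S₀ S₁ S₂ S₃) (hv : v ∈ cosetUnion S₀ S₁ S₂ S₃) (huv : u + v = 0) :
    u = v := by
  have h₁ : u.1 = v.1 := by
    rw [← neg_eq_of_add_eq_zero_left (congrArg Prod.fst huv), ZMod.neg_eq_self_mod_two]
  have h₂ : u.2.1 = v.2.1 := by
    rw [← neg_eq_of_add_eq_zero_left (congrArg (·.2.1) huv), ZMod.neg_eq_self_mod_two]
  have h₃ : u.2.2 + v.2.2 = 0 := congrArg (·.2.2) huv
  simp only [cosetUnion, mem_union, mem_image] at hu hv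
  rcases hu with ((⟨x, hx, rfl⟩ | ⟨x, hx, rfl⟩) | ⟨x, hx, rfl⟩) | ⟨x, hx, rfl⟩ <;>
    rcases hv with ((⟨y, hy, rfl⟩ | ⟨y, hy, rfl⟩) | ⟨y, hy, rfl⟩) | ⟨y, hy, rfl⟩ <;>
    -- twelve of the sixteen cases differ in the `C₂ ⊕ C₂` component
    first
    | (simp at h₁; done)
    | (simp at h₂; done)
    | rw [eq_of_add_eq_zero_of_mem (hA _ (by simp)) hx hy h₃]

end CosetUnion

theorem stmt_15_general (n : ℕ) (hnodd : Odd n)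
    (S₀ S₁ S₂ S₃ : Finset (ZMod n))
    (hcard : ∀ i ∈ [S₀, S₁, S₂, S₃], i.card = (n + 1) / 2)
    (hpm : ∀ i ∈ [S₀, S₁, S₂, S₃], ∀ g : ZMod n, g ≠ 0 → (g ∈ i ↔ -g ∉ i))
    (hsum : (∑ x ∈ S₀, x) + (∑ x ∈ S₁, x) + (∑ x ∈ S₂, x) + (∑ x ∈ S₃, x) = 0)
    (h : ZMod 2 × ZMod 2 × ZMod n)
    (S : Finset (ZMod 2 × ZMod 2 × ZMod n))
    (hS : S = S₀.image (fun x => h + ((0 : ZMod 2), (0 : ZMod 2), x)) ∪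
              S₁.image (fun x => h + ((1 : ZMod 2), (0 : ZMod 2), x)) ∪
              S₂.image (fun x => h + ((0 : ZMod 2), (1 : ZMod 2), x)) ∪
              S₃.image (fun x => h + ((1 : ZMod 2), (1 : ZMod 2), x))) :
    S.card = 2 * n + 2 ∧ ¬ ∃ T ⊆ S, T.card = 2 * n ∧ ∑ g ∈ T, g = 0 := by
  set U := cosetUnion S₀ S₁ S₂ S₃
  have hSU : S = U.image (h + ·) := by
    simp only [hS, U, cosetUnion, image_union, image_image]
    rfl
  have hc₀ := hcard S₀ (by simp)
  have hc₁ := hcard S₁ (by simp)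
  have hc₂ := hcard S₂ (by simp)
  have hc₃ := hcard S₃ (by simp)
  have hU_card : #U = 2 * n + 2 := by
    rw [card_cosetUnion, hc₀, hc₁, hc₂, hc₃]
    obtain ⟨k, rfl⟩ := hnodd
    omega
  have hU_sum : ∑ u ∈ U, u = 0 := by
    rw [sum_id_cosetUnion, hsum, hc₁, hc₂, hc₃, Nat.cast_add, CharTwo.add_self_eq_zero]
    rfl
  have hS_card : #S = 2 * n + 2 := by
    rw [hSU, card_image_of_injective _ (add_right_injective h), hU_card]
  refine ⟨hS_card, fun ⟨T, hTS, hT_card, hT_sum⟩ => ?_⟩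
  obtain ⟨a, ha, b, hb, hab, hab_sum⟩ :=
    exists_ne_add_eq_sum_of_sum_eq_zero hTS (by omega) hT_sum
  rw [hSU, mem_image] at ha hb
  obtain ⟨u, hu, rfl⟩ := ha
  obtain ⟨v, hv, rfl⟩ := hb
  have huv : (h + h) + (u + v) = h + h := calc
    (h + h) + (u + v) = (h + u) + (h + v) := by abel
    _ = (2 * n + 2) • h + 0 := by rw [hab_sum, hSU, sum_image_const_add, hU_card, hU_sum]
    _ = h + h := by rw [add_nsmul, two_mul_nsmul_eq_zero, zero_add, two_nsmul, add_zero]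
  have hneg : ∀ A ∈ [S₀, S₁, S₂, S₃], ∀ g ∈ A, -g ∈ A → g = 0 := fun A hA g hg hng =>
    not_not.1 fun hg0 => (hpm A hA g hg0).1 hg hng
  exact hab (congrArg _ (eq_of_add_eq_zero_of_mem_cosetUnion hneg hu hv (add_eq_left.1 huv)))

theorem stmt_15 (n : ℕ) (hn : 3 ≤ n) (hnodd : Odd n)
    (S₀ S₁ S₂ S₃ : Finset (ZMod n))
    (hcard : ∀ i ∈ [S₀, S₁, S₂, S₃], i.card = (n + 1) / 2)
    (hzero : ∀ i ∈ [S₀, S₁, S₂, S₃], (0 : ZMod n) ∈ i)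
    (hpm : ∀ i ∈ [S₀, S₁, S₂, S₃], ∀ g : ZMod n, g ≠ 0 → (g ∈ i ↔ -g ∉ i))
    (hsum : (∑ x ∈ S₀, x) + (∑ x ∈ S₁, x) + (∑ x ∈ S₂, x) + (∑ x ∈ S₃, x) = 0)
    (h : ZMod 2 × ZMod 2 × ZMod n)
    (S : Finset (ZMod 2 × ZMod 2 × ZMod n))
    (hS : S = S₀.image (fun x => h + ((0 : ZMod 2), (0 : ZMod 2), x)) ∪
              S₁.image (fun x => h + ((1 : ZMod 2), (0 : ZMod 2), x)) ∪
              S₂.image (fun x => h + ((0 : ZMod 2), (1 : ZMod 2), x)) ∪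
              S₃.image (fun x => h + ((1 : ZMod 2), (1 : ZMod 2), x))) :
    S.card = 2 * n + 2 ∧ ¬ ∃ T ⊆ S, T.card = 2 * n ∧ ∑ g ∈ T, g = 0 :=
  stmt_15_general n hnodd S₀ S₁ S₂ S₃ hcard hpm hsum h S hS
end

section
/- Let n ≥ 3, G = C_2 ⊕ C_{2n}, and let S be a squarefree sequence over G of length 2n+1 that has no plus-minus weighted zero-subsum of length 2n. Then for every g dividing S, the dilation 2·Σ⁰(g⁻¹S) equals 2G. -/
/-!
Write `T = S \ {g}` (`2n` elements), `A = 2·Σ⁰(T)` and `H` for the stabilizer of `A` in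
`G = C₂ ⊕ C₂ₙ`. Adding the elements of `T` one at a time, every element whose double lies outside
the current stabilizer strictly enlarges the set of subset sums, so fewer than `|A|` elements of
`T` have their double outside `H`; at most `4|H|` have it inside, since doubling is four-to-one.
As `|H|` divides both `|A|` and `|2G| = n`, the assumption `A ≠ 2G` leaves only `n = 2|H|` and
`A = H`, and then `T` is the whole subgroup `{x | 2x ∈ H}`. Pairing `x` with `-x` shows that its
sum is the sum of the four elements of order at most two, which is `0`: a zero-sum of length
`2n`, excluded by hypothesis.
-/

open Finset Pointwise AddAction

section SubsetSums

variable {ι G : Type*} [AddCommGroup G] [DecidableEq G]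

def subsetSums (f : ι → G) (T : Finset ι) : Finset G :=
  T.powerset.image fun I => ∑ i ∈ I, f i

variable {f : ι → G} {T : Finset ι}

lemma mem_subsetSums {x : G} : x ∈ subsetSums f T ↔ ∃ I ⊆ T, ∑ i ∈ I, f i = x := by
  simp [subsetSums]

lemma zero_mem_subsetSums : (0 : G) ∈ subsetSums f T :=
  mem_subsetSums.2 ⟨∅, empty_subset _, sum_empty⟩

lemma apply_mem_subsetSums {i : ι} (hi : i ∈ T) : f i ∈ subsetSums f T :=
  mem_subsetSums.2 ⟨{i}, singleton_subset_iff.2 hi, sum_singleton _ _⟩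

lemma mem_subsetSums_of_mem_stabilizer {g : G} (hg : g ∈ stabilizer G (subsetSums f T)) :
    g ∈ subsetSums f T := by
  simpa using mem_stabilizer_finset'.1 hg zero_mem_subsetSums

lemma subsetSums_insert [DecidableEq ι] {a : ι} (ha : a ∉ T) :
    subsetSums f (insert a T) = subsetSums f T ∪ (f a +ᵥ subsetSums f T) := by
  rw [subsetSums, powerset_insert, image_union, image_image, vadd_finset_def, subsetSums,
    image_image]
  congr 1
  refine image_congr fun I hI => ?_
  simp [sum_insert (fun h => ha (mem_powerset.1 hI h))]

lemma stabilizer_le_stabilizer_union_vadd (A : Finset G) (a : G) :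
    stabilizer G A ≤ stabilizer G (A ∪ (a +ᵥ A)) := fun h hh => by
  rw [mem_stabilizer_iff] at hh ⊢
  rw [vadd_finset_union, vadd_comm, hh]

theorem card_filter_notMem_stabilizer_lt_card_subsetSums [DecidableEq ι] (f : ι → G)
    (T : Finset ι) : #{i ∈ T | f i ∉ stabilizer G (subsetSums f T)} < #(subsetSums f T) := by
  induction T using Finset.induction_on with
  | empty => simp [subsetSums]
  | insert a T ha ih =>
    rw [subsetSums_insert ha]
    set A := subsetSums f T
    by_cases hfa : f a ∈ stabilizer G A
    · rw [mem_stabilizer_iff.1 hfa, union_self, filter_insert, if_neg (not_not_intro hfa)]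
      exact ih
    · have hgrow : #A < #(A ∪ (f a +ᵥ A)) := by
        refine card_lt_card (subset_union_left.ssubset_of_ne fun h => hfa ?_)
        exact mem_stabilizer_iff.2 <| eq_of_subset_of_card_le
          (subset_union_right.trans h.ge) (card_vadd_finset (f a) A).ge
      have hsub : {i ∈ insert a T | f i ∉ stabilizer G (A ∪ (f a +ᵥ A))} ⊆
          insert a {i ∈ T | f i ∉ stabilizer G A} := by
        intro i
        simp only [mem_filter, mem_insert]
        rintro ⟨rfl | hi, hstab⟩
        · exact .inl rfl
        · exact .inr ⟨hi, mt (stabilizer_le_stabilizer_union_vadd A (f a) ·) hstab⟩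
      have := (card_le_card hsub).trans (card_insert_le _ _)
      omega

end SubsetSums

lemma card_dvd_card_of_le_stabilizer {G : Type*} [AddCommGroup G] [DecidableEq G]
    {H : AddSubgroup G} {A : Finset G} (hH : H ≤ stabilizer G A) : Nat.card H ∣ #A := by
  have hA : QuotientAddGroup.mk ⁻¹' ((QuotientAddGroup.mk (s := H)) '' (A : Set G)) = A := by
    rw [QuotientAddGroup.preimage_image_mk_eq_add]
    refine Set.Subset.antisymm ?_ (Set.subset_add_left _ H.zero_mem)
    rw [← stabilizer_coe_finset] at hH
    exact (Set.add_subset_add_left hH).trans (add_stabilizer_self _).le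
  have hcard : Nat.card (A : Set G) = #A := by simp
  rw [← hcard, ← hA, Nat.card_congr (QuotientAddGroup.preimageMkEquivAddSubgroupProdSet H _),
    Nat.card_prod]
  exact dvd_mul_right _ _

lemma AddMonoidHom.card_filter_apply_mem {G M : Type*} [AddGroup G] [Fintype G] [AddMonoid M]
    [DecidableEq M] (f : G →+ M) {s : Finset M} (hs : ∀ y ∈ s, y ∈ Set.range f) :
    #{g | f g ∈ s} = #{g | f g = 0} * #s := by
  rw [card_eq_sum_card_fiberwise (f := f) (s := {g | f g ∈ s}) (t := s)
    fun g hg => (mem_filter.1 hg).2, mul_comm, ← smul_eq_mul, ← sum_const]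
  refine sum_congr rfl fun y hy => ?_
  rw [filter_filter,
    filter_congr (q := fun g => f g = y) fun g _ => and_iff_right_of_imp (· ▸ hy),
    card_fiber_eq_of_mem_range f (hs y hy) ⟨0, map_zero f⟩]

lemma sum_eq_sum_filter_two_nsmul_eq_zero {G : Type*} [AddCommGroup G] [DecidableEq G]
    {s : Finset G} (hs : ∀ x ∈ s, -x ∈ s) : ∑ x ∈ s, x = ∑ x ∈ s with 2 • x = 0, x := by
  rw [← sum_filter_add_sum_filter_not s (2 • · = 0), add_eq_left]
  refine sum_involution (fun x _ => -x) (fun x _ => add_neg_cancel x) (fun x hx _ h => ?_)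
    (fun x hx => ?_) (fun x _ => neg_neg x)
  · rw [neg_eq_iff_add_eq_zero, ← two_nsmul] at h
    exact (mem_filter.1 hx).2 h
  · rw [mem_filter] at hx ⊢
    exact ⟨hs x hx.1, by rw [smul_neg, neg_eq_zero]; exact hx.2⟩

section Doubling

variable {G : Type*} [AddCommGroup G] [Fintype G] [DecidableEq G]

lemma subsetSums_two_nsmul_subset_image (T : Finset G) :
    subsetSums (2 • ·) T ⊆ univ.image (2 • ·) := fun x hx => by
  obtain ⟨I, -, rfl⟩ := mem_subsetSums.1 hx
  exact mem_image.2 ⟨∑ i ∈ I, i, mem_univ _, smul_sum⟩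

lemma two_nsmul_mem_stabilizer_image_two_nsmul (y : G) :
    2 • y ∈ stabilizer G (univ.image fun x : G => 2 • x) :=
  mem_stabilizer_finset'.2 fun b hb => by
    obtain ⟨z, -, rfl⟩ := mem_image.1 hb
    exact mem_image.2 ⟨y + z, mem_univ _, smul_add 2 y z⟩

lemma card_filter_two_nsmul_mem {s : Finset G} (hs : s ⊆ univ.image (2 • ·)) :
    #{x : G | 2 • x ∈ s} = #{x : G | 2 • x = 0} * #s :=
  (nsmulAddMonoidHom (α := G) 2).card_filter_apply_mem fun y hy => by simpa using hs hy

lemma card_filter_two_nsmul_eq_zero_mul_card_image :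
    #{x : G | 2 • x = 0} * #(univ.image fun x : G => 2 • x) = Fintype.card G := by
  rw [← card_filter_two_nsmul_mem subset_rfl,
    filter_true_of_mem fun g _ => mem_image_of_mem _ (mem_univ g), card_univ]

lemma eq_filter_two_nsmul_mem_stabilizer (hker : #{x : G | 2 • x = 0} = 4) {T : Finset G}
    (hT : 2 * #T = Fintype.card G) (hA : subsetSums (2 • ·) T ≠ univ.image (2 • ·)) :
    T = ({x | 2 • x ∈ stabilizer G (subsetSums (2 • ·) T)} : Finset G) := by
  set A := subsetSums (fun x : G => 2 • x) T
  set H := stabilizer G A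
  have hAR : A ⊆ univ.image (2 • ·) := subsetSums_two_nsmul_subset_image T
  have hHA : ∀ h ∈ H, h ∈ A := fun h => mem_subsetSums_of_mem_stabilizer
  have hHcard : #{x | x ∈ H} = Nat.card H := by
    rw [Nat.card_eq_fintype_card, Fintype.card_subtype]
  have hcardP : #{x | 2 • x ∈ H} = 4 * Nat.card H := by
    simpa only [mem_filter, mem_univ, true_and, hker, hHcard] using
      card_filter_two_nsmul_mem (s := {x | x ∈ H}) fun x hx => hAR (hHA x (mem_filter.1 hx).2)
  have hcardR := (card_filter_two_nsmul_eq_zero_mul_card_image (G := G)).trans hT.symm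
  rw [hker] at hcardR
  obtain ⟨m, hm⟩ := card_dvd_card_of_le_stabilizer (le_refl H)
  obtain ⟨d, hd⟩ := card_dvd_card_of_le_stabilizer fun h hh => by
    obtain ⟨y, -, rfl⟩ := mem_image.1 (hAR (hHA h hh))
    exact two_nsmul_mem_stabilizer_image_two_nsmul y
  have hout : #{t ∈ T | 2 • t ∉ H} < #A := card_filter_notMem_stabilizer_lt_card_subsetSums _ T
  have hin : #{t ∈ T | 2 • t ∈ H} ≤ 4 * Nat.card H :=
    hcardP ▸ card_le_card (monotone_filter_left _ (subset_univ T))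
  have hsplit := card_filter_add_card_filter_not (s := T) (p := fun t => 2 • t ∈ H)
  have hAR' : #A < #(univ.image fun x : G => 2 • x) := card_lt_card (hAR.ssubset_of_ne hA)
  have hpos : 0 < #A := card_pos.2 ⟨0, zero_mem_subsetSums⟩
  obtain ⟨rfl, rfl⟩ : m = 1 ∧ d = 2 := by
    have h0 : 0 < Nat.card H := Nat.card_pos
    have h1 : 2 * d < 4 + m := Nat.lt_of_mul_lt_mul_left (a := Nat.card H) (by nlinarith)
    have h2 : m < d := Nat.lt_of_mul_lt_mul_left (a := Nat.card H) (by omega)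
    have h3 : 0 < m := Nat.pos_of_mul_pos_left (hm ▸ hpos)
    omega
  have hAH : A = ({x | x ∈ H} : Finset G) := (eq_of_subset_of_card_le
    (fun x hx => hHA x (mem_filter.1 hx).2) (by rw [hHcard, hm, mul_one])).symm
  refine eq_of_subset_of_card_le (fun t ht => mem_filter.2 ⟨mem_univ t, ?_⟩)
    (hcardP.trans_le (by omega))
  have ht2 : 2 • t ∈ A := apply_mem_subsetSums ht
  rw [hAH] at ht2
  exact (mem_filter.1 ht2).2

theorem subsetSums_two_nsmul_eq_image (hker : #{x : G | 2 • x = 0} = 4)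
    (hsum : ∑ x : G with 2 • x = 0, x = 0) {T : Finset G} (hT : 2 * #T = Fintype.card G)
    (hT0 : ∑ x ∈ T, x ≠ 0) : subsetSums (2 • ·) T = univ.image (2 • ·) := by
  by_contra hA
  set H := stabilizer G (subsetSums (2 • ·) T)
  apply hT0
  have hneg : ∀ x ∈ ({x | 2 • x ∈ H} : Finset G), -x ∈ ({x | 2 • x ∈ H} : Finset G) := by
    simp only [mem_filter, mem_univ, true_and, smul_neg]
    exact fun x => H.neg_mem
  rw [eq_filter_two_nsmul_mem_stabilizer hker hT hA,
    sum_eq_sum_filter_two_nsmul_eq_zero hneg, filter_filter]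
  refine (sum_congr (filter_congr fun x _ => ?_) fun _ _ => rfl).trans hsum
  exact and_iff_right_of_imp fun h => h ▸ H.zero_mem

end Doubling

namespace ZMod

variable {n : ℕ} [NeZero n]

lemma two_mul_eq_zero_iff (z : ZMod (2 * n)) : 2 * z = 0 ↔ z = 0 ∨ z = n := by
  obtain ⟨v, hv, rfl⟩ : ∃ v < 2 * n, (v : ZMod (2 * n)) = z :=
    ⟨z.val, z.val_lt, z.natCast_zmod_val⟩
  have hn := NeZero.pos n
  have h2v : (2 : ZMod (2 * n)) * v = ((2 * v : ℕ) : ZMod (2 * n)) := by push_cast; rfl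
  rw [h2v, ← Nat.cast_zero, natCast_eq_natCast_iff', natCast_eq_natCast_iff',
    natCast_eq_natCast_iff', Nat.mul_mod_mul_left, Nat.mod_eq_of_lt hv, Nat.zero_mod,
    Nat.mod_eq_of_lt (by omega : n < 2 * n)]
  constructor
  · intro h
    obtain ⟨c, rfl⟩ := Nat.dvd_of_mod_eq_zero (by omega : v % n = 0)
    have : c < 2 := by nlinarith
    interval_cases c <;> simp
  · rintro (rfl | rfl) <;> simp

lemma natCast_ne_zero_two_mul : (n : ZMod (2 * n)) ≠ 0 := by
  have hn := NeZero.pos n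
  rw [Ne, natCast_eq_zero_iff]
  exact Nat.not_dvd_of_pos_of_lt hn (by omega)

lemma filter_two_nsmul_eq_zero_prod :
    ({x | 2 • x = 0} : Finset (ZMod 2 × ZMod (2 * n))) = univ ×ˢ {0, (n : ZMod (2 * n))} := by
  ext ⟨a, b⟩
  simp [Prod.ext_iff, two_mul_eq_zero_iff, show (2 : ZMod 2) = 0 from rfl]

lemma card_filter_two_nsmul_eq_zero_prod :
    #({x | 2 • x = 0} : Finset (ZMod 2 × ZMod (2 * n))) = 4 := by
  rw [filter_two_nsmul_eq_zero_prod, card_product, card_pair natCast_ne_zero_two_mul.symm]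
  rfl

lemma sum_filter_two_nsmul_eq_zero_prod :
    ∑ x : ZMod 2 × ZMod (2 * n) with 2 • x = 0, x = 0 := by
  rw [filter_two_nsmul_eq_zero_prod, Prod.ext_iff, Prod.fst_sum, Prod.snd_sum, sum_product,
    sum_product]
  simp only [sum_pair natCast_ne_zero_two_mul.symm, zero_add, CharTwo.add_self_eq_zero,
    sum_const_zero, sum_const, card_univ, ZMod.card, Prod.fst_zero, Prod.snd_zero, true_and]
  rw [nsmul_eq_mul]
  exact_mod_cast natCast_self (2 * n)

end ZMod

theorem stmt_16 (n : ℕ) (hn : 3 ≤ n)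
    (S : Finset (ZMod 2 × ZMod (2 * n))) (hcard : S.card = 2 * n + 1)
    (hno : ¬ ∃ T ⊆ S, T.card = 2 * n ∧
      ∃ ε : ZMod 2 × ZMod (2 * n) → ℤ, (∀ g ∈ T, ε g = 1 ∨ ε g = -1) ∧
        ∑ g ∈ T, ε g • g = 0) :
    ∀ g ∈ S,
      {x : ZMod 2 × ZMod (2 * n) | ∃ I ⊆ S.erase g, x = 2 • ∑ a ∈ I, a} =
      {x : ZMod 2 × ZMod (2 * n) | ∃ y, x = 2 • y} := by
  intro g hg
  have : NeZero n := ⟨by omega⟩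
  have hT : #(S.erase g) = 2 * n := by rw [card_erase_of_mem hg, hcard, Nat.add_sub_cancel]
  have hT0 : ∑ x ∈ S.erase g, x ≠ 0 := fun h =>
    hno ⟨S.erase g, erase_subset g S, hT, fun _ => 1, fun _ _ => .inl rfl, by simpa using h⟩
  have key := subsetSums_two_nsmul_eq_image ZMod.card_filter_two_nsmul_eq_zero_prod
    ZMod.sum_filter_two_nsmul_eq_zero_prod (by simp [hT, ZMod.card]) hT0
  ext x
  have hx := congrArg (x ∈ ·) key
  simp only [eq_iff_iff, mem_subsetSums, mem_image, mem_univ, true_and] at hx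
  simpa only [Set.mem_ofPred_eq, eq_comm (a := x), smul_sum] using hx
end

section
/- Let G = C_2 ⊕ C_{2n} with n ≥ 2. Then the plus-minus weighted Erdős–Ginzburg–Ziv constant of G equals 2n + ⌊log₂(2n)⌋ + 1. -/
/-- The plus-minus weighted Erdős–Ginzburg–Ziv constant of `C₂ ⊕ C₂ₙ`:
the smallest `ℓ` such that every sequence (multiset) over `ZMod 2 × ZMod (2n)`
of length at least `ℓ` has a subsequence of length `2n` (= the exponent)
admitting a plus-minus weighted zero-sum; a `±1`-weighted zero-sum of `T`
is a partition `T = A + B` with `A.sum = B.sum`. -/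
noncomputable def egzPM (n : ℕ) : ℕ :=
  sInf {ℓ : ℕ | ∀ S : Multiset (ZMod 2 × ZMod (2 * n)), ℓ ≤ Multiset.card S →
    ∃ T ≤ S, Multiset.card T = 2 * n ∧ ∃ A B, T = A + B ∧ A.sum = B.sum}

/-!
Write `k = ⌊log₂ 2n⌋`. For the lower bound take `2n - 1` zeros together with `(1, 0)` and
`(0, 2^i)`, `i < k`. A plus-minus zero-sum of length `2n` inside it must use some of the `k + 1`
nonzero terms, but these admit no nontrivial plus-minus zero-sum: the first coordinate rules out
`(1, 0)`, and distinct sets of powers `2^i` have distinct sums below `2^k ≤ 2n`.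

For the upper bound, split `S` into pairs `{x, ±x}`, each a plus-minus zero-sum, and a remainder
`R` with no two terms equal up to sign, so `|R| ≤ 2n + 2`, the number of classes `{x, -x}`.
Among the `2^(k+3) > |C₂ × C₂ × C₂ₙ|` subsets of any `k + 3` terms, two have the same size
parity and the same sum; their symmetric difference is a nonempty plus-minus zero-sum of even
length at most `k + 3`. Collecting such pieces greedily from `R` and topping up with pairs gives
length exactly `2n`, unless `R` meets all `2n + 2` classes. In that case `R` contains `±(0, v)` and
`±(1, v)` for all `v < 2⌊n/2⌋`, and the `(0, v)` balance the `(1, v)` because there is an even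
number of them.
-/

open Multiset

theorem Multiset.exists_le_card_eq {α : Type*} {s : Multiset α} {m : ℕ} (h : m ≤ card s) :
    ∃ t ≤ s, card t = m := by
  obtain ⟨t, ht⟩ := card_pos_iff_exists_mem.1 (by
    rw [card_powersetCard]; exact Nat.choose_pos h : 0 < card (powersetCard m s))
  exact ⟨t, mem_powersetCard.1 ht⟩

theorem Multiset.card_sum_of_forall_card_eq {α : Type*} {M : Multiset (Multiset α)} {c : ℕ}
    (h : ∀ p ∈ M, card p = c) : card M.sum = card M * c := by
  rw [← join, card_join, map_congr rfl h, map_const', sum_replicate, smul_eq_mul]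

theorem Multiset.sum_filter_ne_zero {M : Type*} [AddCommMonoid M] [DecidableEq M]
    (s : Multiset M) : (s.filter (· ≠ 0)).sum = s.sum := by
  conv_rhs => rw [← filter_add_not (· ≠ 0) s]
  have hzero : (s.filter (¬ · ≠ 0)).sum = 0 :=
    sum_eq_zero fun x hx => by simpa using of_mem_filter hx
  rw [sum_add, hzero, add_zero]

theorem Multiset.exists_eq_sum_pairs_add_nodup_map {α β : Type*} [DecidableEq β] (c : α → β)
    (S : Multiset α) : ∃ (M : Multiset (Multiset α)) (R : Multiset α), S = M.sum + R ∧
      (∀ p ∈ M, ∃ x y, p = {x, y} ∧ c x = c y) ∧ (R.map c).Nodup := by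
  induction S using Multiset.induction with
  | empty => exact ⟨0, 0, rfl, by simp, nodup_zero⟩
  | cons a S ih =>
    obtain ⟨M, R, rfl, hM, hR⟩ := ih
    by_cases ha : c a ∈ R.map c
    · obtain ⟨y, hy, hya⟩ := mem_map.1 ha
      obtain ⟨R₀, rfl⟩ := exists_cons_of_mem hy
      refine ⟨{a, y} ::ₘ M, R₀, ?_, ?_, (map_cons c y R₀ ▸ hR).of_cons⟩
      · simp only [sum_cons, insert_eq_cons, add_cons, cons_add, singleton_add]
      · intro p hp
        rcases mem_cons.1 hp with rfl | hp
        exacts [⟨a, y, rfl, hya.symm⟩, hM p hp]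
    · exact ⟨M, a ::ₘ R, (add_cons ..).symm, hM, map_cons c a R ▸ hR.cons ha⟩

section Counting

variable {α β : Type*} [DecidableEq β] {c : α → β} {R : Multiset α} {s : Finset β}

theorem Multiset.toFinset_map_subset (hc : ∀ x ∈ R, c x ∈ s) : (R.map c).toFinset ⊆ s := by
  intro y hy
  obtain ⟨x, hx, rfl⟩ := mem_map.1 (mem_toFinset.1 hy)
  exact hc x hx

theorem Multiset.card_le_of_nodup_map (hR : (R.map c).Nodup) (hc : ∀ x ∈ R, c x ∈ s) :
    card R ≤ s.card := by
  rw [← card_map c R, ← toFinset_card_of_nodup hR]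
  exact Finset.card_le_card (toFinset_map_subset hc)

theorem Multiset.exists_mem_eq_of_nodup_map_of_card_eq (hR : (R.map c).Nodup)
    (hc : ∀ x ∈ R, c x ∈ s) (hcard : card R = s.card) {y : β} (hy : y ∈ s) :
    ∃ x ∈ R, c x = y := by
  have hsurj := Finset.eq_of_subset_of_card_le (toFinset_map_subset hc)
    (by rw [toFinset_card_of_nodup hR, card_map, hcard])
  simpa [← hsurj] using hy

end Counting

section PMZeroSum

variable {G : Type*} [AddCommGroup G]

def IsPMZeroSum (T : Multiset G) : Prop :=
  ∃ A B, T = A + B ∧ A.sum = B.sum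

namespace IsPMZeroSum

theorem zero : IsPMZeroSum (0 : Multiset G) := ⟨0, 0, rfl, rfl⟩

theorem add {T U : Multiset G} (hT : IsPMZeroSum T) (hU : IsPMZeroSum U) :
    IsPMZeroSum (T + U) := by
  obtain ⟨A, B, rfl, hAB⟩ := hT
  obtain ⟨C, D, rfl, hCD⟩ := hU
  exact ⟨A + C, B + D, add_add_add_comm .., by simp [hAB, hCD]⟩

theorem multiset_sum {M : Multiset (Multiset G)} (h : ∀ T ∈ M, IsPMZeroSum T) :
    IsPMZeroSum M.sum := by
  induction M using Multiset.induction with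
  | empty => exact zero
  | cons T M ih =>
    rw [sum_cons]
    exact (h T (mem_cons_self T M)).add (ih fun U hU => h U (mem_cons_of_mem hU))

theorem pair {x y : G} (h : x = y ∨ x = -y) : IsPMZeroSum {x, y} := by
  rcases h with rfl | rfl
  · exact ⟨{x}, {x}, rfl, rfl⟩
  · exact ⟨{-y, y}, 0, by simp, by simp⟩

theorem add_map_add {D : Multiset G} {t : G} (ht : card D • t = 0) :
    IsPMZeroSum (D + D.map (· + t)) :=
  ⟨D.map (· + t), D, add_comm .., by simp [sum_map_add, ht]⟩

theorem neg_cons {x : G} {T : Multiset G} (h : IsPMZeroSum (x ::ₘ T)) :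
    IsPMZeroSum (-x ::ₘ T) := by
  classical
  suffices key :
      ∀ A B, x ::ₘ T = A + B → A.sum = B.sum → x ∈ A → IsPMZeroSum (-x ::ₘ T) by
    obtain ⟨A, B, hT, hAB⟩ := h
    rcases mem_add.1 (hT ▸ mem_cons_self x T) with hx | hx
    · exact key A B hT hAB hx
    · exact key B A (hT.trans (add_comm A B)) hAB.symm hx
  intro A B hT hAB hx
  obtain ⟨A₀, rfl⟩ := exists_cons_of_mem hx
  refine ⟨A₀, -x ::ₘ B, ?_, ?_⟩
  · rw [cons_add, cons_inj_right] at hT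
    rw [hT, add_cons]
  · rw [sum_cons] at hAB
    rw [sum_cons, ← hAB]
    abel

theorem map_of_eq_or_eq_neg {T : Multiset G} (hT : IsPMZeroSum T) (f : G → G)
    (hf : ∀ x ∈ T, f x = x ∨ f x = -x) : IsPMZeroSum (T.map f) := by
  suffices key : ∀ V, IsPMZeroSum (T + V) → IsPMZeroSum (T.map f + V) by
    simpa using key 0 (by simpa using hT)
  clear hT
  induction T using Multiset.induction with
  | empty => simp
  | cons x T ih =>
    intro V hV
    have hx : IsPMZeroSum (f x ::ₘ (T + V)) := by
      rw [cons_add] at hV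
      rcases hf x (mem_cons_self x T) with h | h <;> rw [h]
      exacts [hV, hV.neg_cons]
    rw [map_cons, cons_add, ← add_cons]
    refine ih (fun y hy => hf y (mem_cons_of_mem hy)) _ ?_
    rwa [add_cons]

end IsPMZeroSum

open Finset in
theorem exists_ne_zero_isPMZeroSum_even_card [Fintype G] (R : Multiset G)
    (h : 2 * Fintype.card G < 2 ^ card R) :
    ∃ U ≤ R, U ≠ 0 ∧ Even (card U) ∧ IsPMZeroSum U := by
  classical
  have hcard : Fintype.card (ZMod 2 × G) < Fintype.card (Finset R) := by
    simpa [Fintype.card_finset, Multiset.card_coe] using h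
  obtain ⟨X, Y, hXY, heq⟩ := Fintype.exists_ne_map_eq_of_card_lt
    (fun X : Finset R => ((#X : ZMod 2), ∑ i ∈ X, (i : G))) hcard
  simp only [Prod.mk.injEq] at heq
  obtain ⟨hpar, hsum⟩ := heq
  let e : R → G := fun x => x
  let D := (X \ Y).disjUnion (Y \ X) disjoint_sdiff_sdiff
  refine ⟨D.val.map e, ?_, ?_, ?_, (X \ Y).val.map e, (Y \ X).val.map e, map_add .., ?_⟩
  · calc D.val.map e ≤ (univ : Finset R).val.map e := map_le_map (val_le_iff.2 (subset_univ D))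
      _ = R := map_univ_coe R
  · have : D.Nonempty := by
      contrapose! hXY
      simp only [D, disjUnion_eq_union, union_eq_empty, sdiff_eq_empty_iff_subset] at hXY
      exact hXY.1.antisymm hXY.2
    rw [Ne, Multiset.map_eq_zero, val_eq_zero]
    exact this.ne_empty
  · have hX := card_sdiff_add_card_inter X Y
    have hY := card_sdiff_add_card_inter Y X
    rw [Finset.inter_comm] at hY
    rw [ZMod.natCast_eq_natCast_iff'] at hpar
    rw [Multiset.card_map, card_val, card_disjUnion, Nat.even_iff]
    omega
  · exact sum_sdiff_eq_sum_sdiff_iff.2 hsum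

theorem exists_le_sum_add_isPMZeroSum_card_eq {M : Multiset (Multiset G)}
    (hM : ∀ p ∈ M, IsPMZeroSum p ∧ card p = 2) {R U : Multiset G} (hUR : U ≤ R)
    (hU : IsPMZeroSum U) {N : ℕ} (hNU : Even (N - card U)) (hUN : card U ≤ N)
    (hNM : N ≤ card U + 2 * card M) : ∃ T ≤ M.sum + R, card T = N ∧ IsPMZeroSum T := by
  obtain ⟨j, hj⟩ := hNU
  obtain ⟨M', hM'M, hM'⟩ := exists_le_card_eq (s := M) (m := j) (by omega)
  have hM'blocks p (hp : p ∈ M') := hM p (mem_of_le hM'M hp)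
  refine ⟨M'.sum + U, add_le_add ?_ hUR, ?_,
    (IsPMZeroSum.multiset_sum fun p hp => (hM'blocks p hp).1).add hU⟩
  · obtain ⟨M'', rfl⟩ := Multiset.le_iff_exists_add.1 hM'M
    simp
  · rw [card_add, card_sum_of_forall_card_eq fun p hp => (hM'blocks p hp).2, hM']
    omega

theorem exists_isPMZeroSum_even_card_between [Fintype G] {r : ℕ}
    (hr : Fintype.card G < 2 ^ (r + 1)) {w : ℕ} (hw : Even w) {R : Multiset G}
    (hR : w + r ≤ card R) :
    ∃ U ≤ R, IsPMZeroSum U ∧ Even (card U) ∧ w ≤ card U ∧ card U ≤ w + r := by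
  classical
  induction w using Nat.strong_induction_on generalizing R with
  | _ w ih =>
  obtain rfl | hw0 := Nat.eq_zero_or_pos w
  · exact ⟨0, zero_le R, .zero, Even.zero, le_rfl, Nat.zero_le _⟩
  have hw2 : 2 ≤ w := by obtain ⟨j, rfl⟩ := hw; omega
  obtain ⟨R', hR'R, hR'⟩ := exists_le_card_eq (s := R) (m := r + 2) (by omega)
  obtain ⟨V, hVR', hVne, hVeven, hV⟩ :=
    exists_ne_zero_isPMZeroSum_even_card R' (by rw [hR', pow_succ]; omega)
  have hVR := hVR'.trans hR'R
  have hVcard : card V ≤ r + 2 := hR' ▸ card_le_card hVR'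
  by_cases hwV : w ≤ card V
  · exact ⟨V, hVR, hV, hVeven, hwV, by omega⟩
  have hV0 : 0 < card V := card_pos.2 hVne
  obtain ⟨U, hUR, hU, hUeven, hwU, hUw⟩ := ih (w - card V) (by omega) (hw.tsub hVeven)
    (R := R - V) (by rw [card_sub hVR]; omega)
  refine ⟨U + V, ?_, hU.add hV, by rw [card_add]; exact hUeven.add hVeven, ?_, ?_⟩
  · calc U + V ≤ R - V + V := add_le_add_left hUR V
      _ = R := tsub_add_cancel_of_le hVR
  all_goals rw [card_add]; omega

end PMZeroSum

section SignClass

variable {m : ℕ}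

def signClass (x : ZMod 2 × ZMod m) : ZMod 2 × ℕ := (x.1, x.2.valMinAbs.natAbs)

theorem signClass_eq_signClass_iff {x y : ZMod 2 × ZMod m} :
    signClass x = signClass y ↔ x = y ∨ x = -y := by
  simp only [signClass, ZMod.natAbs_valMinAbs_eq_natAbs_valMinAbs, Prod.ext_iff,
    Prod.fst_neg, Prod.snd_neg, ZMod.neg_eq_self_mod_two]
  tauto

theorem signClass_mem [NeZero m] (x : ZMod 2 × ZMod m) :
    signClass x ∈ (Finset.univ : Finset (ZMod 2)) ×ˢ Finset.range (m / 2 + 1) :=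
  Finset.mem_product.2
    ⟨Finset.mem_univ _, Finset.mem_range_succ_iff.2 (ZMod.natAbs_valMinAbs_le _)⟩

theorem signClass_natCast {ε : ZMod 2} {v : ℕ} (hv : v ≤ m / 2) :
    signClass (ε, (v : ZMod m)) = (ε, v) := by
  simp [signClass, ZMod.valMinAbs_natCast_of_le_half hv]

end SignClass

theorem exists_isPMZeroSum_of_forall_exists_signClass_eq {n : ℕ}
    {R : Multiset (ZMod 2 × ZMod (2 * n))}
    (hcover : ∀ g : ZMod 2 × ZMod (2 * n), ∃ r ∈ R, signClass r = signClass g) {j : ℕ}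
    (hj : Even j) (hjn : j ≤ n) :
    ∃ T ≤ R, IsPMZeroSum T ∧ card T = 2 * j := by
  choose f hfR hf using hcover
  let D := (range j).map fun v : ℕ => ((0 : ZMod 2), (v : ZMod (2 * n)))
  let C := D + D.map (· + (1, 0))
  have hC : IsPMZeroSum C := .add_map_add <| by
    obtain ⟨i, rfl⟩ := hj
    simp [D, Prod.ext_iff, CharTwo.add_self_eq_zero]
  have hCnd : (C.map signClass).Nodup := by
    have hcls (ε : ZMod 2) (v : ℕ) (hv : v ∈ range j) :
        signClass (ε, (v : ZMod (2 * n))) = (ε, v) :=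
      signClass_natCast (by rw [mem_range] at hv; omega)
    have : C.map signClass = (range j).map (Prod.mk 0) + (range j).map (Prod.mk 1) := by
      simp only [C, D, Multiset.map_add, map_map, Function.comp_def]
      congr 1 <;> refine map_congr rfl fun v hv => ?_
      exacts [hcls 0 v hv, by simpa using hcls 1 v hv]
    rw [this, nodup_add]
    refine ⟨(nodup_range j).map (Prod.mk_right_injective 0),
      (nodup_range j).map (Prod.mk_right_injective 1), disjoint_left.2 fun h0 h1 => ?_⟩
    obtain ⟨_, -, rfl⟩ := mem_map.1 h0
    obtain ⟨_, -, h⟩ := mem_map.1 h1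
    exact zero_ne_one (congrArg Prod.fst h).symm
  have hfC : (C.map f).map signClass = C.map signClass := by
    rw [map_map]; exact map_congr rfl fun g _ => hf g
  refine ⟨C.map f, ?_,
    hC.map_of_eq_or_eq_neg f fun g _ => signClass_eq_signClass_iff.1 (hf g), ?_⟩
  · rw [le_iff_subset (hfC ▸ hCnd).of_map]
    intro x hx
    obtain ⟨g, -, rfl⟩ := mem_map.1 hx
    exact hfR g
  · simp [C, D, two_mul]

theorem ZMod.eq_of_natCast_eq_of_lt {m a b : ℕ} (ha : a < m) (hb : b < m)
    (h : (a : ZMod m) = b) : a = b := by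
  simpa [ZMod.val_cast_of_lt ha, ZMod.val_cast_of_lt hb] using congrArg ZMod.val h

section LowerBound

variable {m k : ℕ}

theorem injOn_mk_zero_two_pow (hk : 2 ^ k ≤ m) :
    Set.InjOn (fun i : ℕ => ((0 : ZMod 2), (2 ^ i : ZMod m))) (Finset.range k) := by
  intro i hi j hj h
  have hlt (l) (hl : l ∈ (Finset.range k : Set ℕ)) : 2 ^ l < m :=
    (Nat.pow_lt_pow_right one_lt_two (Finset.mem_range.1 hl)).trans_le hk
  exact Nat.pow_right_injective le_rfl
    (ZMod.eq_of_natCast_eq_of_lt (hlt i hi) (hlt j hj) (by simpa using congrArg Prod.snd h))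

def extremalSet (m k : ℕ) : Finset (ZMod 2 × ZMod m) :=
  insert (1, 0) ((Finset.range k).image fun i => (0, 2 ^ i))

theorem card_extremalSet (hk : 2 ^ k ≤ m) : (extremalSet m k).card = k + 1 := by
  rw [extremalSet, Finset.card_insert_of_notMem,
    Finset.card_image_of_injOn (injOn_mk_zero_two_pow hk), Finset.card_range]
  simp

theorem zero_notMem_extremalSet (hk : 2 ^ k ≤ m) : 0 ∉ extremalSet m k := by
  simp only [extremalSet, Finset.mem_insert, Finset.mem_image, Finset.mem_range, not_or,
    not_exists, not_and]
  refine ⟨fun h => zero_ne_one (congrArg Prod.fst h), fun i hi h => ?_⟩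
  have hlt : 2 ^ i < m := (Nat.pow_lt_pow_right one_lt_two hi).trans_le hk
  exact (pow_pos two_pos i).ne' <|
    ZMod.eq_of_natCast_eq_of_lt hlt (pos_of_gt hlt) (by simpa using congrArg Prod.snd h)

theorem sum_fst_of_subset_extremalSet {A : Finset (ZMod 2 × ZMod m)} (hA : A ⊆ extremalSet m k) :
    ∑ x ∈ A, x.1 = if (1, 0) ∈ A then 1 else 0 := by
  rw [← Finset.sum_ite_eq' A (1, 0) fun _ => (1 : ZMod 2)]
  refine Finset.sum_congr rfl fun x hx => ?_
  rcases Finset.mem_insert.1 (hA hx) with rfl | hx'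
  · simp
  · obtain ⟨i, -, rfl⟩ := Finset.mem_image.1 hx'
    simp

theorem eq_empty_of_subset_extremalSet (hk : 2 ^ k ≤ m) {A B : Finset (ZMod 2 × ZMod m)}
    (hA : A ⊆ extremalSet m k) (hB : B ⊆ extremalSet m k) (hAB : Disjoint A B)
    (hsum : ∑ x ∈ A, x = ∑ x ∈ B, x) : A = ∅ := by
  have hfst := congrArg Prod.fst hsum
  rw [Prod.fst_sum, Prod.fst_sum, sum_fst_of_subset_extremalSet hA,
    sum_fst_of_subset_extremalSet hB] at hfst
  have hA1 : (1, 0) ∉ A := fun h1 => by simp [h1, Finset.disjoint_left.1 hAB h1] at hfst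
  have hB1 : (1, 0) ∉ B := fun h1 => by simp [h1, Finset.disjoint_right.1 hAB h1] at hfst
  have hpow {C : Finset (ZMod 2 × ZMod m)} (hC : C ⊆ extremalSet m k) (h1 : (1, 0) ∉ C) :
      ∃ I ⊆ Finset.range k, I.image (fun i => ((0 : ZMod 2), (2 ^ i : ZMod m))) = C := by
    rw [extremalSet, Finset.subset_insert_iff, Finset.erase_eq_of_notMem h1] at hC
    exact Finset.subset_image_iff.1 hC
  obtain ⟨I, hI, rfl⟩ := hpow hA hA1
  obtain ⟨J, hJ, rfl⟩ := hpow hB hB1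
  have hsnd := congrArg Prod.snd hsum
  rw [Prod.snd_sum, Prod.snd_sum, Finset.sum_image ((injOn_mk_zero_two_pow hk).mono hI),
    Finset.sum_image ((injOn_mk_zero_two_pow hk).mono hJ)] at hsnd
  have hlt {L : Finset ℕ} (hL : L ⊆ Finset.range k) : ∑ i ∈ L, 2 ^ i < m :=
    (Nat.geomSum_lt le_rfl fun i hi => Finset.mem_range.1 (hL hi)).trans_le hk
  have hIJ : I = J := Finset.geomSum_injective le_rfl <|
    ZMod.eq_of_natCast_eq_of_lt (hlt hI) (hlt hJ) (by push_cast; exact hsnd)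
  subst hIJ
  exact (Finset.disjoint_self_iff_empty _).1 hAB

theorem add_eq_zero_of_le_extremalSet (hk : 2 ^ k ≤ m) {A B : Multiset (ZMod 2 × ZMod m)}
    (hAB : A + B ≤ (extremalSet m k).val) (hsum : A.sum = B.sum) : A + B = 0 := by
  obtain ⟨hA, hB, hdisj⟩ := nodup_add.1 (nodup_of_le hAB (extremalSet m k).nodup)
  have hsub {C : Multiset (ZMod 2 × ZMod m)} (hC : C ≤ A + B) (hCnd : C.Nodup) :
      (⟨C, hCnd⟩ : Finset _) ⊆ extremalSet m k :=
    Finset.val_le_iff.1 (hC.trans hAB)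
  have hA0 := eq_empty_of_subset_extremalSet hk (hsub (le_add_right A B) hA)
    (hsub (le_add_left B A) hB) (Finset.disjoint_val.1 hdisj) (by simpa using hsum)
  have hB0 := eq_empty_of_subset_extremalSet hk (hsub (le_add_left B A) hB)
    (hsub (le_add_right A B) hA) (Finset.disjoint_val.1 hdisj.symm) (by simpa using hsum.symm)
  rw [show A = 0 from congrArg Finset.val hA0, show B = 0 from congrArg Finset.val hB0, add_zero]

end LowerBound

theorem exists_card_eq_forall_not_isPMZeroSum {n : ℕ} (hn : 2 ≤ n) :
    ∃ S₀ : Multiset (ZMod 2 × ZMod (2 * n)), card S₀ = 2 * n + Nat.log 2 (2 * n) ∧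
      ∀ T ≤ S₀, card T = 2 * n → ¬ IsPMZeroSum T := by
  classical
  set k := Nat.log 2 (2 * n)
  have hk : 2 ^ k ≤ 2 * n := Nat.pow_log_le_self 2 (by omega)
  have h0 := zero_notMem_extremalSet hk
  refine ⟨replicate (2 * n - 1) 0 + (extremalSet (2 * n) k).val, ?_, ?_⟩
  · rw [card_add, card_replicate, Finset.card_val, card_extremalSet hk]
    omega
  rintro T hT hTcard ⟨A, B, rfl, hsum⟩
  have hnonzero : (A + B).filter (· ≠ 0) = 0 := by
    have hle : (A + B).filter (· ≠ 0) ≤ (extremalSet (2 * n) k).val := by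
      refine (filter_le_filter _ hT).trans_eq ?_
      rw [filter_add, filter_eq_nil.2 fun x hx => by simp [eq_of_mem_replicate hx],
        filter_eq_self.2 fun x hx => ne_of_mem_of_not_mem hx h0, zero_add]
    rw [filter_add] at hle ⊢
    exact add_eq_zero_of_le_extremalSet hk hle
      (by rw [sum_filter_ne_zero, sum_filter_ne_zero, hsum])
  have hzero : ∀ x ∈ A + B, 0 = x := fun x hx =>
    (not_not.1 (filter_eq_nil.1 hnonzero x hx)).symm
  have := count_le_of_le 0 hT
  rw [count_eq_card.2 hzero, count_add, count_replicate_self, count_eq_zero.2 h0] at this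
  omega

theorem exists_le_card_eq_isPMZeroSum {n : ℕ} (hn : 2 ≤ n)
    {S : Multiset (ZMod 2 × ZMod (2 * n))} (hS : 2 * n + Nat.log 2 (2 * n) + 1 ≤ card S) :
    ∃ T ≤ S, card T = 2 * n ∧ IsPMZeroSum T := by
  classical
  have : NeZero (2 * n) := ⟨by omega⟩
  set k := Nat.log 2 (2 * n)
  have hk : 2 ≤ k := Nat.le_log_of_pow_le one_lt_two (by omega)
  have hlt : 2 * n < 2 ^ (k + 1) := Nat.lt_pow_succ_log_self one_lt_two _
  obtain ⟨M, R, rfl, hM, hR⟩ := exists_eq_sum_pairs_add_nodup_map signClass S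
  have hblocks : ∀ p ∈ M, IsPMZeroSum p ∧ card p = 2 := fun p hp => by
    obtain ⟨x, y, rfl, hxy⟩ := hM p hp
    exact ⟨.pair (signClass_eq_signClass_iff.1 hxy), rfl⟩
  have hclass (x) (_ : x ∈ R) := signClass_mem (m := 2 * n) x
  have hclasses : (Finset.univ ×ˢ Finset.range (2 * n / 2 + 1) : Finset (ZMod 2 × ℕ)).card =
      2 * n + 2 := by
    simp only [Finset.card_product, Finset.card_univ, ZMod.card, Finset.card_range]
    omega
  have hRcard := card_le_of_nodup_map hR hclass
  rw [card_add, card_sum_of_forall_card_eq fun p hp => (hblocks p hp).2] at hS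
  suffices ∃ U ≤ R, IsPMZeroSum U ∧ Even (card U) ∧ card U ≤ 2 * n ∧
      2 * n ≤ card U + 2 * card M by
    obtain ⟨U, hUR, hU, hUeven, hU2n, h2nU⟩ := this
    exact exists_le_sum_add_isPMZeroSum_card_eq hblocks hUR hU ((even_two_mul n).tsub hUeven)
      hU2n h2nU
  by_cases hMn : n ≤ card M
  · exact ⟨0, zero_le R, .zero, .zero, by simp, by simp; omega⟩
  by_cases hfull : card R = 2 * n + 2
  · obtain ⟨T, hTR, hT, hTcard⟩ := exists_isPMZeroSum_of_forall_exists_signClass_eq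
      (fun g => exists_mem_eq_of_nodup_map_of_card_eq hR hclass (hfull.trans hclasses.symm)
        (signClass_mem g)) (j := 2 * (n / 2)) (even_two_mul _) (by omega)
    exact ⟨T, hTR, hT, hTcard ▸ even_two_mul _, by omega, by omega⟩
  · -- now `card R ≤ 2n + 1` forces `2 * card M ≥ k`, which absorbs the overshoot of the greedy
    -- collection
    obtain ⟨U, hUR, hU, hUeven, hwU, hUw⟩ := exists_isPMZeroSum_even_card_between (r := k + 1)
      (by simp only [Fintype.card_prod, ZMod.card, pow_succ] at hlt ⊢; omega)
      (w := 2 * (n - card M)) (even_two_mul _) (R := R) (by omega)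
    obtain ⟨i, hi⟩ := hUeven
    exact ⟨U, hUR, hU, ⟨i, hi⟩, by omega, by omega⟩

theorem stmt_18 (n : ℕ) (hn : 2 ≤ n) :
    egzPM n = 2 * n + Nat.log 2 (2 * n) + 1 := by
  obtain ⟨S₀, hS₀card, hS₀⟩ := exists_card_eq_forall_not_isPMZeroSum hn
  have hupper := fun S (hS : _ ≤ card S) => exists_le_card_eq_isPMZeroSum hn hS
  refine le_antisymm (Nat.sInf_le hupper) (le_csInf ⟨_, hupper⟩ fun ℓ hℓ => ?_)
  by_contra! hℓS₀
  obtain ⟨T, hT, hTcard, hTsum⟩ := hℓ S₀ (by omega)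
  exact hS₀ T hT hTcard hTsum
end

section
/- Let G = C_{n_1} ⊕ ⋯ ⊕ C_{n_r} with 1 < n_1 | n_2 | ⋯ | n_r. Then the plus-minus weighted Davenport constant D_±(G) satisfies ∑_{i=1}^r ⌊log₂ n_i⌋ + 1 ≤ D_±(G) ≤ ⌊log₂|G|⌋ + 1. -/
/-- The plus-minus weighted Davenport constant of a finite abelian group `G`:
the smallest `ℓ` such that every sequence (multiset) over `G` of length at
least `ℓ` has a non-empty subsequence admitting a plus-minus weighted
zero-sum, i.e. a partition `T = A + B` with `A.sum = B.sum`. -/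
noncomputable def davenportPM (G : Type*) [AddCommGroup G] : ℕ :=
  sInf {ℓ : ℕ | ∀ S : Multiset G, ℓ ≤ Multiset.card S →
    ∃ T ≤ S, T ≠ 0 ∧ ∃ A B, T = A + B ∧ A.sum = B.sum}

/-!
Call a sequence `S` plus-minus zero-sum free if no non-empty subsequence `A + B` has
`A.sum = B.sum`. Upper bound: if `S` has length `> log₂ |G|`, either `S` repeats an element
`a`, and `{a} + {a}` is a plus-minus zero-sum, or `S` is a set with more than `|G|` subsets,
two of which have the same sum; removing their intersection gives the plus-minus zero-sum.
Lower bound: the powers `1, 2, …, 2^(k-1)` with `2^k ≤ n` are zero-sum free in `ℤ/n`, because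
all their subsums are below `n` and a power of two exceeds the sum of all smaller ones;
placing these sequences in the separate coordinates of `⊕ ℤ/nᵢ` keeps the sequence zero-sum
free, coordinate by coordinate.
-/

open Multiset

section General

variable {M G H : Type*} [AddCommMonoid M] [AddCommGroup G] [AddCommGroup H]

def PMZeroSumFree (S : Multiset M) : Prop :=
  ∀ A B : Multiset M, A + B ≤ S → A.sum = B.sum → A + B = 0

theorem not_pmZeroSumFree_iff {S : Multiset M} :
    ¬ PMZeroSumFree S ↔ ∃ T ≤ S, T ≠ 0 ∧ ∃ A B, T = A + B ∧ A.sum = B.sum := by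
  simp only [PMZeroSumFree, not_forall, exists_prop]
  exact ⟨fun ⟨A, B, hle, hsum, hne⟩ => ⟨A + B, hle, hne, A, B, rfl, hsum⟩,
    fun ⟨_, hle, hne, A, B, hT, hsum⟩ => ⟨A, B, hT ▸ hle, hsum, hT ▸ hne⟩⟩

theorem PMZeroSumFree.zero_notMem {S : Multiset M} (hS : PMZeroSumFree S) : (0 : M) ∉ S := by
  intro h0
  simpa using hS {0} 0 (by simpa using h0) (by simp)

theorem PMZeroSumFree.of_map (f : G →+ H) {S : Multiset G} (hS : PMZeroSumFree (S.map f)) :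
    PMZeroSumFree S := by
  intro A B hle hsum
  have h := hS (A.map f) (B.map f) (by rw [← map_add]; exact map_le_map hle)
    (by rw [← map_multiset_sum, ← map_multiset_sum, hsum])
  rwa [← map_add, map_eq_zero] at h

theorem Multiset.sum_filter_ne_zero_s19 [DecidableEq M] (S : Multiset M) :
    (S.filter (· ≠ 0)).sum = S.sum := by
  rw [← sum_filter_add_sum_filter_not (· ≠ 0) (s := S), sum_eq_zero (s := filter (¬ · ≠ 0) S),
    add_zero]
  intro x hx
  simpa using (mem_filter.1 hx).2

end General

section Davenport

variable {G : Type*} [AddCommGroup G]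

theorem not_pmZeroSumFree_of_log_lt_card [Fintype G] {S : Multiset G}
    (hS : Nat.log 2 (Fintype.card G) < card S) : ¬ PMZeroSumFree S := by
  classical
  intro hfree
  by_cases hnd : S.Nodup
  · lift S to Finset G using hnd
    obtain ⟨X, hX, Y, hY, hne, heq⟩ := Finset.exists_ne_map_eq_of_card_lt_of_maps_to
      (s := S.powerset) (t := Finset.univ) (f := fun X : Finset G => ∑ x ∈ X, x)
      (by rw [Finset.card_powerset, Finset.card_univ]; exact Nat.lt_pow_of_log_lt one_lt_two hS)
      (fun _ _ => Finset.mem_coe.2 (Finset.mem_univ _))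
    have hXY : (X \ Y).val + (Y \ X).val ≤ S.val := by
      rw [← Finset.disjUnion_val _ _ disjoint_sdiff_sdiff, Finset.val_le_iff,
        Finset.disjUnion_eq_union]
      simp only [Finset.mem_powerset] at hX hY
      exact Finset.union_subset (Finset.sdiff_subset.trans hX) (Finset.sdiff_subset.trans hY)
    have hsum : (X \ Y).val.sum = (Y \ X).val.sum := by
      simpa [Finset.sum_eq_multiset_sum] using Finset.sum_sdiff_eq_sum_sdiff_iff.2 heq
    obtain ⟨hXY0, hYX0⟩ := add_eq_zero.1 (hfree _ _ hXY hsum)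
    exact hne <| Finset.Subset.antisymm
      (Finset.sdiff_eq_empty_iff_subset.1 (Finset.val_eq_zero.1 hXY0))
      (Finset.sdiff_eq_empty_iff_subset.1 (Finset.val_eq_zero.1 hYX0))
  · obtain ⟨a, t, rfl⟩ : ∃ a t, S = a ::ₘ a ::ₘ t := by
      simpa [nodup_iff_ne_cons_cons] using hnd
    simpa using hfree {a} {a} (by simp) rfl

theorem davenportPM_eq :
    davenportPM G = sInf {ℓ : ℕ | ∀ S : Multiset G, ℓ ≤ card S → ¬ PMZeroSumFree S} := by
  simp only [davenportPM, not_pmZeroSumFree_iff]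

theorem davenportPM_le_log_card_add_one [Fintype G] :
    davenportPM G ≤ Nat.log 2 (Fintype.card G) + 1 :=
  davenportPM_eq (G := G) ▸ Nat.sInf_le fun _ hS => not_pmZeroSumFree_of_log_lt_card hS

theorem card_lt_davenportPM [Fintype G] {S : Multiset G} (hS : PMZeroSumFree S) :
    card S < davenportPM G := by
  rw [davenportPM_eq]
  by_contra! h
  have hmem : Nat.log 2 (Fintype.card G) + 1 ∈
      {ℓ : ℕ | ∀ S : Multiset G, ℓ ≤ card S → ¬ PMZeroSumFree S} :=
    fun _ => not_pmZeroSumFree_of_log_lt_card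
  exact Nat.sInf_mem ⟨_, hmem⟩ S h hS

end Davenport

def twoPowers (k : ℕ) : Multiset ℕ := (range k).map (2 ^ ·)

theorem twoPowers_succ (k : ℕ) : twoPowers (k + 1) = 2 ^ k ::ₘ twoPowers k := by
  simp [twoPowers, range_succ]

theorem sum_lt_two_pow_of_le_twoPowers {k : ℕ} {A : Multiset ℕ} (hA : A ≤ twoPowers k) :
    A.sum < 2 ^ k := by
  have hgeom : (twoPowers k).sum = 2 ^ k - 1 := by
    simpa [twoPowers, Finset.sum_eq_multiset_sum] using Nat.geomSum_eq le_rfl k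
  obtain ⟨C, hC⟩ := Multiset.le_iff_exists_add.1 hA
  have := Nat.one_le_two_pow (n := k)
  rw [hC, sum_add] at hgeom
  omega

theorem le_of_mem_of_add_le_cons {α : Type*} {a : α} {A B S : Multiset α} (ha : a ∈ A)
    (h : A + B ≤ a ::ₘ S) : B ≤ S := by
  obtain ⟨A', rfl⟩ := exists_cons_of_mem ha
  rw [cons_add, cons_le_cons_iff] at h
  exact (le_add_left _ _).trans h

theorem pmZeroSumFree_twoPowers (k : ℕ) : PMZeroSumFree (twoPowers k) := by
  induction k with
  | zero => intro A B hAB _; simpa [twoPowers] using hAB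
  | succ k ih =>
    intro A B hAB hsum
    rw [twoPowers_succ] at hAB
    -- `2 ^ k` exceeds the sum of all smaller powers of two, so it lies in neither side.
    have htop : ∀ A B : Multiset ℕ, A + B ≤ 2 ^ k ::ₘ twoPowers k → A.sum = B.sum →
        2 ^ k ∉ A := fun A B hAB hsum hA => by
      have := sum_lt_two_pow_of_le_twoPowers (le_of_mem_of_add_le_cons hA hAB)
      have := le_sum_of_mem hA
      omega
    have hA := htop A B hAB hsum
    have hB := htop B A (add_comm A B ▸ hAB) hsum.symm
    exact ih A B ((le_cons_of_notMem (by simp [hA, hB])).1 hAB) hsum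

theorem pmZeroSumFree_twoPowers_zmod (n : ℕ) :
    PMZeroSumFree ((twoPowers (Nat.log 2 n)).map (Nat.cast : ℕ → ZMod n)) := by
  rcases eq_or_ne n 0 with rfl | hn
  · intro A B hAB _; simpa [twoPowers] using hAB
  have : NeZero n := ⟨hn⟩
  set k := Nat.log 2 n
  have hkn : 2 ^ k ≤ n := Nat.pow_log_le_self 2 hn
  -- Below `n` the cast to `ZMod n` is injective, and all subsums of `twoPowers k` are below `n`.
  have hval : ((twoPowers k).map (Nat.cast : ℕ → ZMod n)).map ZMod.val = twoPowers k := by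
    rw [map_map]
    refine (map_congr rfl fun x hx => ZMod.val_natCast_of_lt ?_).trans (map_id _)
    have hx : x < 2 ^ k := by simpa using sum_lt_two_pow_of_le_twoPowers (singleton_le.2 hx)
    exact hx.trans_le hkn
  intro A B hAB hsum
  have hle : A.map ZMod.val + B.map ZMod.val ≤ twoPowers k := by
    rw [← map_add, ← hval]; exact map_le_map hAB
  have hcast : ∀ C : Multiset (ZMod n), (((C.map ZMod.val).sum : ℕ) : ZMod n) = C.sum := by
    intro C; simp [Nat.cast_multiset_sum, map_map]
  have hsumℕ : (A.map ZMod.val).sum = (B.map ZMod.val).sum := by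
    have h := (hcast A).trans (hsum.trans (hcast B).symm)
    rwa [ZMod.natCast_eq_natCast_iff', Nat.mod_eq_of_lt, Nat.mod_eq_of_lt] at h
    · exact (sum_lt_two_pow_of_le_twoPowers ((le_add_left _ _).trans hle)).trans_le hkn
    · exact (sum_lt_two_pow_of_le_twoPowers ((le_add_right _ _).trans hle)).trans_le hkn
  have h0 := pmZeroSumFree_twoPowers k _ _ hle hsumℕ
  rwa [← map_add, map_eq_zero] at h0

theorem PMZeroSumFree.pi {ι : Type*} [Fintype ι] [DecidableEq ι] {G : ι → Type*}
    [∀ i, AddCommGroup (G i)] {S : ∀ i, Multiset (G i)} (hS : ∀ i, PMZeroSumFree (S i)) :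
    PMZeroSumFree (∑ i, (S i).map (Pi.single i)) := by
  classical
  have hproj : ∀ i,
      ((∑ k, (S k).map (Pi.single k)).map (Function.eval i)).filter (· ≠ 0) = S i := by
    intro i
    rw [← mapAddMonoidHom_apply, map_sum, ← Finset.add_sum_erase _ _ (Finset.mem_univ i),
      filter_add, (filter_eq_nil (s := ∑ k ∈ Finset.univ.erase i, _)).2, add_zero]
    · simpa [map_map] using filter_eq_self.2 fun x hx (h0 : x = 0) => (hS i).zero_notMem (h0 ▸ hx)
    · intro x hx
      obtain ⟨k, hk, hx⟩ := mem_sum.1 hx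
      obtain ⟨s, -, rfl⟩ := mem_map.1 (by simpa [map_map] using hx)
      simp [Pi.single_eq_of_ne' (Finset.ne_of_mem_erase hk)]
  intro A B hAB hsum
  have hcoord : ∀ i, ((A + B).map (Function.eval i)).filter (· ≠ 0) = 0 := by
    intro i
    rw [Multiset.map_add, filter_add]
    refine hS i _ _ ?_ ?_
    · rw [← filter_add, ← Multiset.map_add]
      exact (filter_le_filter _ (map_le_map hAB)).trans (hproj i).le
    · rw [sum_filter_ne_zero_s19, sum_filter_ne_zero_s19]
      have h := congrArg (Pi.evalAddMonoidHom G i) hsum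
      rwa [map_multiset_sum, map_multiset_sum] at h
  refine eq_zero_of_forall_notMem fun x hx => ?_
  obtain ⟨i, -, hxi⟩ := mem_sum.1 (mem_of_le hAB hx)
  obtain ⟨s, hs, rfl⟩ := mem_map.1 hxi
  have hs0 : s ≠ 0 := fun h => (hS i).zero_notMem (h ▸ hs)
  have hmem : s ∈ ((A + B).map (Function.eval i)).filter (· ≠ 0) :=
    mem_filter.2 ⟨by simpa using mem_map_of_mem (Function.eval i) hx, hs0⟩
  simp [hcoord i] at hmem

theorem stmt_19_general (G : Type*) [AddCommGroup G] [Fintype G]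
    (r : ℕ) (nn : Fin r → ℕ)
    (iso : G ≃+ ((i : Fin r) → ZMod (nn i))) :
    (∑ i, Nat.log 2 (nn i)) + 1 ≤ davenportPM G ∧
      davenportPM G ≤ Nat.log 2 (Fintype.card G) + 1 := by
  refine ⟨?_, davenportPM_le_log_card_add_one⟩
  let S : Multiset ((i : Fin r) → ZMod (nn i)) :=
    ∑ i, ((twoPowers (Nat.log 2 (nn i))).map Nat.cast).map (Pi.single i)
  have hS : PMZeroSumFree S := PMZeroSumFree.pi fun i => pmZeroSumFree_twoPowers_zmod (nn i)
  have hfree : PMZeroSumFree (S.map iso.symm) :=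
    PMZeroSumFree.of_map iso.toAddMonoidHom (by simpa [map_map] using hS)
  have hcard : card (S.map iso.symm) = ∑ i, Nat.log 2 (nn i) := by
    simp [S, card_sum, twoPowers]
  exact hcard ▸ card_lt_davenportPM hfree

theorem stmt_19 (G : Type*) [AddCommGroup G] [Fintype G]
    (r : ℕ) (nn : Fin r → ℕ) (hone : ∀ i, 1 < nn i)
    (hdvd : ∀ i j : Fin r, i ≤ j → nn i ∣ nn j)
    (iso : G ≃+ ((i : Fin r) → ZMod (nn i))) :
    (∑ i, Nat.log 2 (nn i)) + 1 ≤ davenportPM G ∧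
      davenportPM G ≤ Nat.log 2 (Fintype.card G) + 1 :=
  stmt_19_general G r nn iso
end
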